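/- arXiv:math/0508612 — 9 statements merged into one kernel-verified Lean document; each statement's English description precedes it below -/
import Mathlib

section
/- Almost surely, the chain (Z_n) alternates in sign (Z_1 > 0, Z_2 < 0, Z_3 > 0, ...), the absolute values are nonincreasing (|Z_{n+1}| ≤ |Z_n| for all n), |Z_n| → 0 as n → ∞, and the series Σ_{n≥1} Z_n converges. -/
open MeasureTheory ProbabilityTheory Filter Set

/-- The transition kernel of the fluctuation chain: for `x > 0`, `κ(x,·)` is the law of
`-W` where `W ∈ (0,x]` has c.d.f. `t ↦ Ȟ(t)/Ȟ(x)` (i.e. the normalized restriction of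
`μ̌` to `(0,x]`, pushed by negation); for `x < 0`, `κ(x,·)` is the normalized restriction
of `μ` to `(0,-x]`; and `κ(0,·) = δ₀`. -/
noncomputable def fluctKernel (μ μc : Measure ℝ) (H Hc : ℝ → ℝ) (x : ℝ) : Measure ℝ :=
  if 0 < x then
    Measure.map (fun y => -y) ((ENNReal.ofReal (Hc x))⁻¹ • μc.restrict (Set.Ioc 0 x))
  else if x < 0 then
    (ENNReal.ofReal (H (-x)))⁻¹ • μ.restrict (Set.Ioc 0 (-x))
  else Measure.dirac 0

/-!
The kernel moves a nonzero state `x` to a point of the opposite sign with `|y| ≤ |x|`, so almost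
surely the chain alternates in sign with nonincreasing absolute values, starting from `Z₁ > 0`
since `H 0 = 0`. From any state `x`, the probability of landing at distance more than `q > 0`
from the origin is `(H |x| - H q) / H |x| ≤ 1 - H q` (or the same with `Ȟ`), as `H ≤ 1`; hence
staying above `q` for `N` steps has probability at most `(1 - min (H q) (Ȟ q)) ^ N`, so
`|Zₙ| → 0` almost surely. The series then converges by the alternating series test.
-/

def HasMarkovTransitions {Ω : Type*} [MeasurableSpace Ω] (P : Measure Ω)
    (Z : ℕ → Ω → ℝ) (κ : ℝ → Measure ℝ) : Prop :=
  ∀ (n : ℕ) (s : Set (Fin (n + 1) → ℝ)) (A : Set ℝ), MeasurableSet s → MeasurableSet A →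
    P ({ω | (fun i : Fin (n + 1) => Z (i.1 + 1) ω) ∈ s} ∩ {ω | Z (n + 2) ω ∈ A})
      = ∫⁻ ω in {ω | (fun i : Fin (n + 1) => Z (i.1 + 1) ω) ∈ s}, κ (Z (n + 1) ω) A ∂P

namespace HasMarkovTransitions

variable {Ω : Type*} [MeasurableSpace Ω] {P : Measure Ω} {Z : ℕ → Ω → ℝ}
  {κ : ℝ → Measure ℝ}

theorem ae_notMem_of_kernel_eq_zero (hκZ : HasMarkovTransitions P Z κ)
    (hZ : ∀ n, Measurable (Z n)) (n : ℕ) {B A : Set ℝ} (hB : MeasurableSet B)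
    (hA : MeasurableSet A) (hκ : ∀ x ∈ B, κ x A = 0) :
    ∀ᵐ ω ∂P, Z (n + 1) ω ∈ B → Z (n + 2) ω ∉ A := by
  have hs : MeasurableSet {v : Fin (n + 1) → ℝ | v (Fin.last n) ∈ B} :=
    measurable_pi_apply _ hB
  have hE : MeasurableSet {ω | Z (n + 1) ω ∈ B} := hZ _ hB
  have hnull : P ({ω | Z (n + 1) ω ∈ B} ∩ {ω | Z (n + 2) ω ∈ A}) = 0 :=
    (hκZ n _ A hs hA).trans <|
      (setLIntegral_congr_fun (g := fun _ => 0) hE fun ω hω => hκ _ hω).trans lintegral_zero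
  filter_upwards [measure_eq_zero_iff_ae_notMem.1 hnull] with ω hω hB hA
  exact hω ⟨hB, hA⟩

/-- The kernel is not assumed measurable in the state, so the state-dependent event
`|Z (n + 1)| < |Z (n + 2)|` is covered by countably many events with rational thresholds. -/
theorem ae_abs_le_of_kernel (hκZ : HasMarkovTransitions P Z κ)
    (hZ : ∀ n, Measurable (Z n)) (n : ℕ) (hκ : ∀ x r, |x| ≤ r → κ x {y | r < |y|} = 0) :
    ∀ᵐ ω ∂P, |Z (n + 2) ω| ≤ |Z (n + 1) ω| := by
  have hr : ∀ r : ℚ, ∀ᵐ ω ∂P, |Z (n + 1) ω| ≤ r → ¬ (r : ℝ) < |Z (n + 2) ω| :=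
    fun r => hκZ.ae_notMem_of_kernel_eq_zero hZ n (measurableSet_le measurable_abs measurable_const)
      (measurableSet_lt measurable_const measurable_abs) fun x hx => hκ x r hx
  filter_upwards [ae_all_iff.2 hr] with ω hω
  by_contra! hlt
  obtain ⟨r, hr₁, hr₂⟩ := exists_rat_btwn hlt
  exact hω r hr₁.le hr₂

theorem measure_forall_mem_le_pow [IsProbabilityMeasure P] (hκZ : HasMarkovTransitions P Z κ)
    {A : Set ℝ} (hA : MeasurableSet A) {c : ENNReal}
    (hκ : ∀ x ∈ A, κ x A ≤ c) (N : ℕ) :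
    P {ω | ∀ i : Fin (N + 1), Z (i.1 + 1) ω ∈ A} ≤ c ^ N := by
  induction N with
  | zero => simpa using prob_le_one (μ := P)
  | succ N ih =>
    have hs : MeasurableSet (univ.pi fun _ : Fin (N + 1) => A) :=
      MeasurableSet.univ_pi fun _ => hA
    have hsplit : {ω | ∀ i : Fin (N + 2), Z (i.1 + 1) ω ∈ A}
        = {ω | (fun i : Fin (N + 1) => Z (i.1 + 1) ω) ∈ univ.pi fun _ => A}
          ∩ {ω | Z (N + 2) ω ∈ A} := by
      ext ω
      simp [Fin.forall_fin_succ']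
    calc P {ω | ∀ i : Fin (N + 2), Z (i.1 + 1) ω ∈ A}
        = ∫⁻ ω in {ω | ∀ i : Fin (N + 1), Z (i.1 + 1) ω ∈ A}, κ (Z (N + 1) ω) A ∂P := by
          rw [hsplit, hκZ N _ A hs hA]; simp only [mem_univ_pi]
      _ ≤ ∫⁻ _ in {ω | ∀ i : Fin (N + 1), Z (i.1 + 1) ω ∈ A}, c ∂P :=
          setLIntegral_mono measurable_const fun ω hω => hκ _ (hω (Fin.last N))
      _ ≤ c ^ N * c := by rw [setLIntegral_const, mul_comm]; gcongr
      _ = c ^ (N + 1) := (pow_succ c N).symm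

theorem ae_exists_notMem [IsProbabilityMeasure P] (hκZ : HasMarkovTransitions P Z κ)
    {A : Set ℝ} (hA : MeasurableSet A) {c : ENNReal} (hc : c < 1)
    (hκ : ∀ x ∈ A, κ x A ≤ c) :
    ∀ᵐ ω ∂P, ∃ n, Z (n + 1) ω ∉ A := by
  rw [ae_iff, ← nonpos_iff_eq_zero]
  refine ge_of_tendsto' (ENNReal.tendsto_pow_atTop_nhds_zero_of_lt_one hc) fun N => ?_
  calc P {ω | ¬∃ n, Z (n + 1) ω ∉ A}
      ≤ P {ω | ∀ i : Fin (N + 1), Z (i.1 + 1) ω ∈ A} :=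
        measure_mono fun ω hω i => not_exists_not.1 hω i
    _ ≤ c ^ N := hκZ.measure_forall_mem_le_pow hA hκ N

end HasMarkovTransitions

theorem inv_ofReal_mul_measure_Ioc_le {ν : Measure ℝ} [IsFiniteMeasure ν] {G : ℝ → ℝ}
    (hν : ∀ x, 0 ≤ x → ν (Iic x) = ENNReal.ofReal (G x)) {q x : ℝ} (hq : 0 ≤ q)
    (hGq : 0 ≤ G q) (hGx : 0 < G x) (hGx₁ : G x ≤ 1) :
    (ENNReal.ofReal (G x))⁻¹ * ν (Ioc q x) ≤ ENNReal.ofReal (1 - G q) := by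
  rcases le_or_gt q x with hqx | hxq
  · have hIoc : ν (Ioc q x) = ENNReal.ofReal (G x - G q) := by
      have hunion := measure_union (μ := ν) (Iic_disjoint_Ioc le_rfl)
        (measurableSet_Ioc (a := q) (b := x))
      rw [Iic_union_Ioc_eq_Iic hqx, hν x (hq.trans hqx), hν q hq] at hunion
      rw [ENNReal.ofReal_sub _ hGq, hunion, ENNReal.add_sub_cancel_left ENNReal.ofReal_ne_top]
    rw [hIoc, mul_comm, ← div_eq_mul_inv, ← ENNReal.ofReal_div_of_pos hGx]
    refine ENNReal.ofReal_le_ofReal ((div_le_iff₀ hGx).2 ?_)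
    nlinarith
  · simp [Ioc_eq_empty_of_le hxq.le]

section fluctKernel

variable {μ μc : Measure ℝ} {H Hc : ℝ → ℝ} {x : ℝ}

theorem fluctKernel_apply_of_pos (hx : 0 < x) {A : Set ℝ} (hA : MeasurableSet A) :
    fluctKernel μ μc H Hc x A = (ENNReal.ofReal (Hc x))⁻¹ * μc (-A ∩ Ioc 0 x) := by
  rw [fluctKernel, if_pos hx, Measure.map_apply measurable_neg hA, Measure.smul_apply,
    smul_eq_mul, Measure.restrict_apply (measurable_neg hA)]
  rfl

theorem fluctKernel_apply_of_neg (hx : x < 0) {A : Set ℝ} (hA : MeasurableSet A) :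
    fluctKernel μ μc H Hc x A = (ENNReal.ofReal (H (-x)))⁻¹ * μ (A ∩ Ioc 0 (-x)) := by
  rw [fluctKernel, if_neg hx.not_gt, if_pos hx, Measure.smul_apply, smul_eq_mul,
    Measure.restrict_apply hA]

theorem fluctKernel_Ici_of_pos (hx : 0 < x) : fluctKernel μ μc H Hc x (Ici 0) = 0 := by
  rw [fluctKernel_apply_of_pos hx measurableSet_Ici, neg_Ici, neg_zero,
    (Iic_disjoint_Ioc le_rfl).inter_eq, measure_empty, mul_zero]

theorem fluctKernel_Iic_of_neg (hx : x < 0) : fluctKernel μ μc H Hc x (Iic 0) = 0 := by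
  rw [fluctKernel_apply_of_neg hx measurableSet_Iic, (Iic_disjoint_Ioc le_rfl).inter_eq,
    measure_empty, mul_zero]

theorem neg_setOf_lt_abs (q : ℝ) : -{y : ℝ | q < |y|} = {y | q < |y|} := by
  ext y; simp

theorem setOf_lt_abs_inter_Ioc {q : ℝ} (hq : 0 ≤ q) (x : ℝ) :
    {y : ℝ | q < |y|} ∩ Ioc 0 x = Ioc q x := by
  ext y
  simp only [mem_inter_iff, mem_ofPred_eq, mem_Ioc]
  constructor
  · rintro ⟨hqy, hy, hyx⟩
    exact ⟨by rwa [abs_of_pos hy] at hqy, hyx⟩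
  · rintro ⟨hqy, hyx⟩
    exact ⟨by rwa [abs_of_pos (hq.trans_lt hqy)], hq.trans_lt hqy, hyx⟩

theorem fluctKernel_setOf_lt_abs_of_abs_le {r : ℝ} (hx : |x| ≤ r) :
    fluctKernel μ μc H Hc x {y | r < |y|} = 0 := by
  have hr : 0 ≤ r := (abs_nonneg x).trans hx
  have hA : MeasurableSet {y : ℝ | r < |y|} := measurableSet_lt measurable_const measurable_abs
  rcases lt_trichotomy x 0 with hx₀ | rfl | hx₀
  · rw [fluctKernel_apply_of_neg hx₀ hA, setOf_lt_abs_inter_Ioc hr,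
      Ioc_eq_empty (by rw [abs_of_neg hx₀] at hx; linarith), measure_empty, mul_zero]
  · rw [fluctKernel, if_neg (lt_irrefl 0), if_neg (lt_irrefl 0), Measure.dirac_apply' _ hA]
    simp [hr]
  · rw [fluctKernel_apply_of_pos hx₀ hA, neg_setOf_lt_abs, setOf_lt_abs_inter_Ioc hr,
      Ioc_eq_empty (by rw [abs_of_pos hx₀] at hx; linarith), measure_empty, mul_zero]

theorem fluctKernel_setOf_lt_abs_le [IsFiniteMeasure μ] [IsFiniteMeasure μc]
    (hHpos : ∀ x : ℝ, 0 < x → 0 < H x) (hHcpos : ∀ x : ℝ, 0 < x → 0 < Hc x)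
    (hHle : ∀ x : ℝ, 0 ≤ x → H x ≤ 1) (hHcle : ∀ x : ℝ, 0 ≤ x → Hc x ≤ 1)
    (hμ : ∀ x : ℝ, 0 ≤ x → μ (Iic x) = ENNReal.ofReal (H x))
    (hμc : ∀ x : ℝ, 0 ≤ x → μc (Iic x) = ENNReal.ofReal (Hc x)) {q : ℝ} (hq : 0 < q)
    (x : ℝ) :
    fluctKernel μ μc H Hc x {y | q < |y|} ≤ ENNReal.ofReal (1 - min (H q) (Hc q)) := by
  have hA : MeasurableSet {y : ℝ | q < |y|} := measurableSet_lt measurable_const measurable_abs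
  rcases lt_trichotomy x 0 with hx₀ | rfl | hx₀
  · rw [fluctKernel_apply_of_neg hx₀ hA, setOf_lt_abs_inter_Ioc hq.le]
    refine (inv_ofReal_mul_measure_Ioc_le hμ hq.le (hHpos q hq).le
      (hHpos _ (neg_pos.2 hx₀)) (hHle _ (neg_pos.2 hx₀).le)).trans ?_
    exact ENNReal.ofReal_le_ofReal (by linarith [min_le_left (H q) (Hc q)])
  · rw [fluctKernel_setOf_lt_abs_of_abs_le (by simpa using hq.le)]
    exact bot_le
  · rw [fluctKernel_apply_of_pos hx₀ hA, neg_setOf_lt_abs, setOf_lt_abs_inter_Ioc hq.le]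
    refine (inv_ofReal_mul_measure_Ioc_le hμc hq.le (hHcpos q hq).le
      (hHcpos _ hx₀) (hHcle _ hx₀.le)).trans ?_
    exact ENNReal.ofReal_le_ofReal (by linarith [min_le_right (H q) (Hc q)])

end fluctKernel

section FluctChain

variable {Ω : Type*} [MeasurableSpace Ω] {P : Measure Ω} {Z : ℕ → Ω → ℝ}
  {μ μc : Measure ℝ} {H Hc : ℝ → ℝ}

theorem ae_sign_flip_and_abs_le (hchain : HasMarkovTransitions P Z (fluctKernel μ μc H Hc))
    (hZ : ∀ n, Measurable (Z n)) :
    ∀ᵐ ω ∂P, ∀ n, (0 < Z (n + 1) ω → Z (n + 2) ω < 0) ∧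
      (Z (n + 1) ω < 0 → 0 < Z (n + 2) ω) ∧ |Z (n + 2) ω| ≤ |Z (n + 1) ω| := by
  refine ae_all_iff.2 fun n => ?_
  filter_upwards [hchain.ae_notMem_of_kernel_eq_zero hZ n measurableSet_Ioi measurableSet_Ici
      fun _ hx => fluctKernel_Ici_of_pos hx,
    hchain.ae_notMem_of_kernel_eq_zero hZ n measurableSet_Iio measurableSet_Iic
      fun _ hx => fluctKernel_Iic_of_neg hx,
    hchain.ae_abs_le_of_kernel hZ n fun _ _ => fluctKernel_setOf_lt_abs_of_abs_le]
    with ω hpos hneg habs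
  exact ⟨fun h => not_le.1 (hpos h), fun h => not_le.1 (hneg h), habs⟩

theorem ae_exists_abs_le_one_div [IsProbabilityMeasure P] [IsFiniteMeasure μ]
    [IsFiniteMeasure μc] (hchain : HasMarkovTransitions P Z (fluctKernel μ μc H Hc))
    (hHpos : ∀ x : ℝ, 0 < x → 0 < H x) (hHcpos : ∀ x : ℝ, 0 < x → 0 < Hc x)
    (hHle : ∀ x : ℝ, 0 ≤ x → H x ≤ 1) (hHcle : ∀ x : ℝ, 0 ≤ x → Hc x ≤ 1)
    (hμ : ∀ x : ℝ, 0 ≤ x → μ (Iic x) = ENNReal.ofReal (H x))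
    (hμc : ∀ x : ℝ, 0 ≤ x → μc (Iic x) = ENNReal.ofReal (Hc x)) :
    ∀ᵐ ω ∂P, ∀ k : ℕ, ∃ n, |Z (n + 1) ω| ≤ 1 / (k + 1) := by
  refine ae_all_iff.2 fun k => ?_
  have hq : (0 : ℝ) < 1 / (k + 1) := Nat.one_div_pos_of_nat
  have hc : ENNReal.ofReal (1 - min (H (1 / (k + 1))) (Hc (1 / (k + 1)))) < 1 :=
    ENNReal.ofReal_lt_one.2 (by linarith [lt_min (hHpos _ hq) (hHcpos _ hq)])
  filter_upwards [hchain.ae_exists_notMem (measurableSet_lt measurable_const measurable_abs) hc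
    fun x _ => fluctKernel_setOf_lt_abs_le hHpos hHcpos hHle hHcle hμ hμc hq x]
    with ω ⟨n, hn⟩
  exact ⟨n, not_lt.1 hn⟩

end FluctChain

theorem alternating_of_sign_flip {z : ℕ → ℝ} (h₁ : 0 < z 1)
    (hpos : ∀ n, 0 < z (n + 1) → z (n + 2) < 0)
    (hneg : ∀ n, z (n + 1) < 0 → 0 < z (n + 2)) :
    ∀ n, 1 ≤ n → (Odd n → 0 < z n) ∧ (Even n → z n < 0) := by
  intro n hn
  induction n, hn using Nat.le_induction with
  | base => exact ⟨fun _ => h₁, fun h => absurd h (by decide)⟩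
  | succ n hn ih =>
    obtain ⟨k, rfl⟩ := Nat.exists_eq_add_of_le' hn
    exact ⟨fun h => hneg k (ih.2 (Nat.not_odd_iff_even.1 (Nat.odd_add_one.1 h))),
      fun h => hpos k (ih.1 (Nat.not_even_iff_odd.1 (Nat.even_add_one.1 h)))⟩

theorem tendsto_zero_of_antitone_of_le_one_div {f : ℕ → ℝ} (hanti : Antitone f)
    (hf : ∀ n, 0 ≤ f n) (hsmall : ∀ k : ℕ, ∃ n, f n ≤ 1 / (k + 1)) :
    Tendsto f atTop (nhds 0) := by
  refine tendsto_order.2 ⟨fun a ha => Eventually.of_forall fun n => ha.trans_le (hf n),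
    fun a ha => ?_⟩
  obtain ⟨k, hk⟩ := exists_nat_one_div_lt ha
  obtain ⟨N, hN⟩ := hsmall k
  exact eventually_atTop.2 ⟨N, fun n hn => (hanti hn).trans_lt (hN.trans_lt hk)⟩

theorem exists_tendsto_sum_Icc_of_alternating {z : ℕ → ℝ}
    (hsign : ∀ n, 1 ≤ n → (Odd n → 0 < z n) ∧ (Even n → z n < 0))
    (hanti : Antitone fun n => |z (n + 1)|) (hlim : Tendsto (fun n => |z (n + 1)|) atTop (nhds 0)) :
    ∃ L, Tendsto (fun N => ∑ n ∈ Finset.Icc 1 N, z n) atTop (nhds L) := by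
  obtain ⟨L, hL⟩ := hanti.tendsto_alternating_series_of_tendsto_zero hlim
  refine ⟨L, hL.congr fun N => ?_⟩
  rw [← Finset.Ico_add_one_right_eq_Icc, Finset.sum_Ico_eq_sum_range, Nat.add_sub_cancel]
  refine Finset.sum_congr rfl fun i _ => ?_
  rw [add_comm 1 i]
  rcases Nat.even_or_odd i with hi | hi
  · rw [hi.neg_one_pow, one_mul, abs_of_pos ((hsign (i + 1) (by omega)).1 hi.add_one)]
  · rw [hi.neg_one_pow, neg_one_mul, abs_of_neg ((hsign (i + 1) (by omega)).2 hi.add_one),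
      neg_neg]

theorem statement0_general
    {Ω : Type*} [MeasurableSpace Ω] (P : Measure Ω) [IsProbabilityMeasure P]
    (H Hc : ℝ → ℝ) (μ μc : Measure ℝ)
    [IsProbabilityMeasure μ] [IsProbabilityMeasure μc]
    (hH0 : H 0 = 0)
    (hHpos : ∀ x : ℝ, 0 < x → 0 < H x) (hHcpos : ∀ x : ℝ, 0 < x → 0 < Hc x)
    (hHle : ∀ x : ℝ, 0 ≤ x → H x ≤ 1) (hHcle : ∀ x : ℝ, 0 ≤ x → Hc x ≤ 1)
    (hμ : ∀ x : ℝ, 0 ≤ x → μ (Set.Iic x) = ENNReal.ofReal (H x))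
    (hμc : ∀ x : ℝ, 0 ≤ x → μc (Set.Iic x) = ENNReal.ofReal (Hc x))
    (Z : ℕ → Ω → ℝ) (hZmeas : ∀ n, Measurable (Z n))
    (hinit : P.map (Z 1) = μ)
    (hmarkov : ∀ (n : ℕ) (s : Set (Fin (n + 1) → ℝ)) (A : Set ℝ),
      MeasurableSet s → MeasurableSet A →
      P ({ω | (fun i : Fin (n + 1) => Z (i.1 + 1) ω) ∈ s} ∩ {ω | Z (n + 2) ω ∈ A})
        = ∫⁻ ω in {ω | (fun i : Fin (n + 1) => Z (i.1 + 1) ω) ∈ s},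
            fluctKernel μ μc H Hc (Z (n + 1) ω) A ∂P) :
    ∀ᵐ ω ∂P,
      (∀ n : ℕ, 1 ≤ n → (Odd n → 0 < Z n ω) ∧ (Even n → Z n ω < 0)) ∧
      (∀ n : ℕ, 1 ≤ n → |Z (n + 1) ω| ≤ |Z n ω|) ∧
      Tendsto (fun n => |Z n ω|) atTop (nhds 0) ∧
      (∃ L : ℝ, Tendsto (fun N => ∑ n ∈ Finset.Icc 1 N, Z n ω) atTop (nhds L)) := by
  have hchain : HasMarkovTransitions P Z (fluctKernel μ μc H Hc) := hmarkov
  have hZ₁ : ∀ᵐ ω ∂P, 0 < Z 1 ω := by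
    have h : P.map (Z 1) (Iic 0) = 0 := by rw [hinit, hμ 0 le_rfl, hH0, ENNReal.ofReal_zero]
    rw [Measure.map_apply (hZmeas 1) measurableSet_Iic] at h
    filter_upwards [measure_eq_zero_iff_ae_notMem.1 h] with ω hω
    simpa using hω
  filter_upwards [hZ₁, ae_sign_flip_and_abs_le hchain hZmeas,
    ae_exists_abs_le_one_div hchain hHpos hHcpos hHle hHcle hμ hμc] with ω h₁ hstep hsmall
  have hsign := alternating_of_sign_flip (z := (Z · ω)) h₁ (fun n => (hstep n).1)
    fun n => (hstep n).2.1
  have hanti : Antitone fun n => |Z (n + 1) ω| := antitone_nat_of_succ_le fun n => (hstep n).2.2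
  have hlim := tendsto_zero_of_antitone_of_le_one_div hanti (fun _ => abs_nonneg _) hsmall
  refine ⟨hsign, fun n hn => ?_, (tendsto_add_atTop_iff_nat 1).1 hlim,
    exists_tendsto_sum_Icc_of_alternating hsign hanti hlim⟩
  obtain ⟨k, rfl⟩ := Nat.exists_eq_add_of_le' hn
  exact (hstep k).2.2

/-- Let `H, Ȟ : [0,∞) → [0,1]` be continuous nondecreasing with `H(0) = Ȟ(0) = 0`,
positive on `(0,∞)` and tending to `1` at `∞`; let `μ, μ̌` be the probability measures
on `(0,∞)` with c.d.f.s `H, Ȟ`, and let `(Z_n)_{n≥1}` be the Markov chain with initial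
law `Z_1 ∼ μ` and transition kernel `κ = fluctKernel μ μ̌ H Ȟ`.  Then almost surely:
the signs of `Z_n` alternate (`Z_1 > 0, Z_2 < 0, …`), `|Z_{n+1}| ≤ |Z_n|` for all `n ≥ 1`,
`|Z_n| → 0`, and the series `Σ_{n≥1} Z_n` converges. -/
theorem statement0
    {Ω : Type*} [MeasurableSpace Ω] (P : Measure Ω) [IsProbabilityMeasure P]
    (H Hc : ℝ → ℝ) (μ μc : Measure ℝ)
    [IsProbabilityMeasure μ] [IsProbabilityMeasure μc]
    (hHcont : ContinuousOn H (Set.Ici 0)) (hHccont : ContinuousOn Hc (Set.Ici 0))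
    (hHmono : MonotoneOn H (Set.Ici 0)) (hHcmono : MonotoneOn Hc (Set.Ici 0))
    (hH0 : H 0 = 0) (hHc0 : Hc 0 = 0)
    (hHpos : ∀ x : ℝ, 0 < x → 0 < H x) (hHcpos : ∀ x : ℝ, 0 < x → 0 < Hc x)
    (hHle : ∀ x : ℝ, 0 ≤ x → H x ≤ 1) (hHcle : ∀ x : ℝ, 0 ≤ x → Hc x ≤ 1)
    (hHlim : Tendsto H atTop (nhds 1)) (hHclim : Tendsto Hc atTop (nhds 1))
    (hμ : ∀ x : ℝ, 0 ≤ x → μ (Set.Iic x) = ENNReal.ofReal (H x))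
    (hμc : ∀ x : ℝ, 0 ≤ x → μc (Set.Iic x) = ENNReal.ofReal (Hc x))
    (Z : ℕ → Ω → ℝ) (hZmeas : ∀ n, Measurable (Z n))
    (hinit : P.map (Z 1) = μ)
    (hmarkov : ∀ (n : ℕ) (s : Set (Fin (n + 1) → ℝ)) (A : Set ℝ),
      MeasurableSet s → MeasurableSet A →
      P ({ω | (fun i : Fin (n + 1) => Z (i.1 + 1) ω) ∈ s} ∩ {ω | Z (n + 2) ω ∈ A})
        = ∫⁻ ω in {ω | (fun i : Fin (n + 1) => Z (i.1 + 1) ω) ∈ s},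
            fluctKernel μ μc H Hc (Z (n + 1) ω) A ∂P) :
    ∀ᵐ ω ∂P,
      (∀ n : ℕ, 1 ≤ n → (Odd n → 0 < Z n ω) ∧ (Even n → Z n ω < 0)) ∧
      (∀ n : ℕ, 1 ≤ n → |Z (n + 1) ω| ≤ |Z n ω|) ∧
      Tendsto (fun n => |Z n ω|) atTop (nhds 0) ∧
      (∃ L : ℝ, Tendsto (fun N => ∑ n ∈ Finset.Icc 1 N, Z n ω) atTop (nhds L)) :=
  statement0_general P H Hc μ μc hH0 hHpos hHcpos hHle hHcle hμ hμc Z hZmeas hinit hmarkov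
end

section
/- For every real λ and every x > 0, φ(x,λ) = ∫_{(0,x]} e^{−λy} (φ̌(y,−λ)/Ȟ(y)) μ(dy), and symmetrically φ̌(x,λ) = ∫_{(0,x]} e^{−λy} (φ(y,−λ)/H(y)) μ̌(dy). -/
/-!
Given `Z₁ = y`, the step `Z₂` is `-W` with `W` distributed as `Ž₁` given `Ž₁ ≤ y`, and the kernel
with data `(μ, μ̌, H, Ȟ)` at `z` is the image under negation of the kernel with data `(μ̌, μ, Ȟ, H)`
at `-z`. So `Z₂ + Z₃ + ⋯` has the law of `-F̌` given `Ž₁ ≤ y`, which gives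
`E[e^{-λF}; Z₁ ∈ dy] = e^{-λy} E[e^{λF̌}; Ž₁ ≤ y] / Ȟ(y) μ(dy)`.

As the Markov property is only available for finite-dimensional distributions, this is carried
out for the partial sums `Z₁ + ⋯ + Z_N`, where both sides are iterated kernel integrals
(`prodIter`) matched by the negation symmetry. The limit `N → ∞` is dominated convergence: the
steps alternate in sign with decreasing modulus, so every partial sum lies in `[0, Z₁]`.
-/

open MeasureTheory ProbabilityTheory Filter Set

/-- `φ(x,λ) = E[1_{Z₁ ≤ x} e^{-λ F}]`. -/
noncomputable def phiFn {Ω : Type*} [MeasurableSpace Ω] (P : Measure Ω)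
    (Z1 F : Ω → ℝ) (x lam : ℝ) : ℝ :=
  ∫ ω, (if Z1 ω ≤ x then Real.exp (-(lam * F ω)) else 0) ∂P

open scoped ENNReal

section MarkovChain

variable {Ω α : Type*} [MeasurableSpace Ω] [MeasurableSpace α]

/-- The path `(Z₁, …, Z_{n+1})`. -/
def pathVec (Z : ℕ → Ω → α) (n : ℕ) (ω : Ω) : Fin (n + 1) → α := fun i => Z (i.1 + 1) ω

theorem measurable_pathVec {Z : ℕ → Ω → α} (hZ : ∀ n, Measurable (Z n)) (n : ℕ) :
    Measurable (pathVec Z n) :=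
  measurable_pi_lambda _ fun _ => hZ _

structure IsMarkovChain (P : Measure Ω) (Z : ℕ → Ω → α) (ν : Measure α) (κ : α → Measure α) :
    Prop where
  measurable : ∀ n, Measurable (Z n)
  map_one : P.map (Z 1) = ν
  markov : ∀ (n : ℕ) (s : Set (Fin (n + 1) → α)) (A : Set α), MeasurableSet s → MeasurableSet A →
    P (pathVec Z n ⁻¹' s ∩ Z (n + 2) ⁻¹' A) = ∫⁻ ω in pathVec Z n ⁻¹' s, κ (Z (n + 1) ω) A ∂P

/-- `prodIter κ f k z` is the expectation of `∏_{j=1}^k f (Z_j)` for the chain with kernel `κ`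
started at `Z_0 = z`. -/
noncomputable def prodIter (κ : α → Measure α) (f : α → ℝ≥0∞) : ℕ → α → ℝ≥0∞
  | 0 => 1
  | k + 1 => fun z => ∫⁻ w, f w * prodIter κ f k w ∂κ z

variable {κ : α → Measure α} {f : α → ℝ≥0∞}

theorem prodIter_succ (k : ℕ) (z : α) :
    prodIter κ f (k + 1) z = ∫⁻ w, f w * prodIter κ f k w ∂κ z :=
  rfl

theorem measurable_prodIter (hκ : Measurable κ) (hf : Measurable f) (k : ℕ) :
    Measurable (prodIter κ f k) := by
  induction k with
  | zero => exact measurable_const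
  | succ k ih => exact (Measure.measurable_lintegral (hf.mul ih)).comp hκ

namespace IsMarkovChain

variable {P : Measure Ω} {Z : ℕ → Ω → α} {ν : Measure α}

theorem map_restrict_eq_bind (hZ : IsMarkovChain P Z ν κ) (hκ : Measurable κ) (n : ℕ)
    {s : Set (Fin (n + 1) → α)} (hs : MeasurableSet s) :
    (P.restrict (pathVec Z n ⁻¹' s)).map (Z (n + 2))
      = (P.restrict (pathVec Z n ⁻¹' s)).bind fun ω => κ (Z (n + 1) ω) := by
  have hκZ : Measurable fun ω => κ (Z (n + 1) ω) := hκ.comp (hZ.measurable _)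
  ext A hA
  rw [Measure.map_apply (hZ.measurable _) hA, Measure.bind_apply hA hκZ.aemeasurable,
    Measure.restrict_apply (hA.preimage (hZ.measurable _)), Set.inter_comm]
  exact hZ.markov n s A hs hA

theorem lintegral_mul_comp_succ (hZ : IsMarkovChain P Z ν κ) (hκ : Measurable κ) (n : ℕ)
    {g : (Fin (n + 1) → α) → ℝ≥0∞} {h : α → ℝ≥0∞} (hg : Measurable g) (hh : Measurable h) :
    ∫⁻ ω, g (pathVec Z n ω) * h (Z (n + 2) ω) ∂P
      = ∫⁻ ω, g (pathVec Z n ω) * ∫⁻ w, h w ∂κ (Z (n + 1) ω) ∂P := by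
  have hV := measurable_pathVec hZ.measurable n
  have hκZ : Measurable fun ω => κ (Z (n + 1) ω) := hκ.comp (hZ.measurable _)
  have hd₁ : Measurable fun ω => h (Z (n + 2) ω) := hh.comp (hZ.measurable _)
  have hd₂ : Measurable fun ω => ∫⁻ w, h w ∂κ (Z (n + 1) ω) :=
    (Measure.measurable_lintegral hh).comp hκZ
  -- both sides integrate `g` against the image under the path of `P` with a density, and these
  -- images agree on sets by `map_restrict_eq_bind`
  have hmap : (P.withDensity fun ω => h (Z (n + 2) ω)).map (pathVec Z n)
      = (P.withDensity fun ω => ∫⁻ w, h w ∂κ (Z (n + 1) ω)).map (pathVec Z n) := by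
    ext s hs
    rw [Measure.map_apply hV hs, Measure.map_apply hV hs, withDensity_apply _ (hs.preimage hV),
      withDensity_apply _ (hs.preimage hV), ← lintegral_map hh (hZ.measurable _),
      hZ.map_restrict_eq_bind hκ n hs, Measure.lintegral_bind hκZ.aemeasurable hh.aemeasurable]
  have e₁ := lintegral_withDensity_eq_lintegral_mul P hd₁ (hg.comp hV)
  have e₂ := lintegral_withDensity_eq_lintegral_mul P hd₂ (hg.comp hV)
  simp only [Pi.mul_apply, Function.comp_apply] at e₁ e₂
  simp_rw [mul_comm (g (pathVec Z n _))]
  rw [← e₁, ← e₂, ← lintegral_map hg hV, ← lintegral_map hg hV, hmap]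

theorem lintegral_mul_prod (hZ : IsMarkovChain P Z ν κ) (hκ : Measurable κ) (hf : Measurable f)
    (k n : ℕ) {g : (Fin (n + 1) → α) → ℝ≥0∞} (hg : Measurable g) :
    ∫⁻ ω, g (pathVec Z n ω) * ∏ j ∈ Finset.range k, f (Z (n + j + 2) ω) ∂P
      = ∫⁻ ω, g (pathVec Z n ω) * prodIter κ f k (Z (n + 1) ω) ∂P := by
  induction k generalizing n g with
  | zero => simp [prodIter]
  | succ k ih =>
    have hg' : Measurable fun v : Fin (n + 2) → α => g (Fin.init v) * f (v (Fin.last (n + 1))) :=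
      (hg.comp (measurable_pi_lambda _ fun _ => measurable_pi_apply _)).mul
        (hf.comp (measurable_pi_apply _))
    calc ∫⁻ ω, g (pathVec Z n ω)
            * ∏ j ∈ Finset.range (k + 1), f (Z (n + j + 2) ω) ∂P
        = ∫⁻ ω, (g (pathVec Z n ω) * f (Z (n + 2) ω))
            * ∏ j ∈ Finset.range k, f (Z (n + 1 + j + 2) ω) ∂P := by
          refine lintegral_congr fun ω => ?_
          have hidx : ∀ j, n + (j + 1) + 2 = n + 1 + j + 2 := fun j => by omega
          simp only [Finset.prod_range_succ', hidx, add_zero]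
          ring
      _ = ∫⁻ ω, g (pathVec Z n ω)
            * (f (Z (n + 2) ω) * prodIter κ f k (Z (n + 2) ω)) ∂P := by
          simp_rw [← mul_assoc]
          exact ih (n + 1) hg'
      _ = _ := hZ.lintegral_mul_comp_succ hκ n hg (hf.mul (measurable_prodIter hκ hf k))

theorem lintegral_comp_mul_prod (hZ : IsMarkovChain P Z ν κ) (hκ : Measurable κ) (hf : Measurable f)
    {g : α → ℝ≥0∞} (hg : Measurable g) (k : ℕ) :
    ∫⁻ ω, g (Z 1 ω) * ∏ j ∈ Finset.range k, f (Z (j + 2) ω) ∂P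
      = ∫⁻ y, g y * prodIter κ f k y ∂ν := by
  have h := hZ.lintegral_mul_prod hκ hf k 0 (hg.comp (measurable_pi_apply 0))
  simp only [zero_add] at h
  rw [← hZ.map_one, lintegral_map (f := fun y => g y * prodIter κ f k y)
    (hg.mul (measurable_prodIter hκ hf k)) (hZ.measurable 1)]
  exact h

theorem ae_imp_notMem (hZ : IsMarkovChain P Z ν κ) (n : ℕ)
    {B A : Set α} (hB : MeasurableSet B) (hA : MeasurableSet A) (hκ0 : ∀ x ∈ B, κ x A = 0) :
    ∀ᵐ ω ∂P, Z (n + 1) ω ∈ B → Z (n + 2) ω ∉ A := by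
  have hnull : P (Z (n + 1) ⁻¹' B ∩ Z (n + 2) ⁻¹' A) = 0 := by
    rw [show Z (n + 1) ⁻¹' B = pathVec Z n ⁻¹' {v | v (Fin.last n) ∈ B} from rfl,
      hZ.markov n {v | v (Fin.last n) ∈ B} A (measurable_pi_apply _ hB) hA]
    exact (setLIntegral_congr_fun (hB.preimage (hZ.measurable _)) fun ω hω => hκ0 _ hω).trans
      lintegral_zero
  filter_upwards [measure_eq_zero_iff_ae_notMem.1 hnull] with ω hω h₁ h₂ using hω ⟨h₁, h₂⟩

theorem ae_forall_mem_Icc {Z : ℕ → Ω → ℝ} {ν : Measure ℝ} {κ : ℝ → Measure ℝ}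
    (hZ : IsMarkovChain P Z ν κ) {l u : ℝ → ℝ} (hl : Measurable l) (hu : Measurable u)
    (hκ : ∀ x, κ x (Icc (l x) (u x))ᶜ = 0) :
    ∀ᵐ ω ∂P, ∀ n, Z (n + 2) ω ∈ Icc (l (Z (n + 1) ω)) (u (Z (n + 1) ω)) := by
  -- a violation of the bounds is witnessed by a rational threshold, i.e. by one of countably
  -- many events of the form `{Z (n + 1) ∈ B, Z (n + 2) ∈ A}` with `κ x A = 0` for `x ∈ B`
  have hlow (n : ℕ) (q : ℚ) : ∀ᵐ ω ∂P, Z (n + 1) ω ∈ {x | q < l x} → Z (n + 2) ω ∉ Iio (q : ℝ) :=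
    hZ.ae_imp_notMem n (measurableSet_lt measurable_const hl) measurableSet_Iio fun x hx =>
      measure_mono_null (t := (Icc (l x) (u x))ᶜ)
        (fun w hw hmem => (hmem.1.trans hw.le).not_gt hx) (hκ x)
  have hupp (n : ℕ) (q : ℚ) : ∀ᵐ ω ∂P, Z (n + 1) ω ∈ {x | u x < q} → Z (n + 2) ω ∉ Ioi (q : ℝ) :=
    hZ.ae_imp_notMem n (measurableSet_lt hu measurable_const) measurableSet_Ioi fun x hx =>
      measure_mono_null (t := (Icc (l x) (u x))ᶜ)
        (fun w hw hmem => (hw.le.trans hmem.2).not_gt hx) (hκ x)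
  filter_upwards [ae_all_iff.2 fun n => ae_all_iff.2 (hlow n),
    ae_all_iff.2 fun n => ae_all_iff.2 (hupp n)] with ω hlow hupp n
  refine ⟨not_lt.1 fun h => ?_, not_lt.1 fun h => ?_⟩
  · obtain ⟨q, hq₁, hq₂⟩ := exists_rat_btwn h
    exact hlow n q hq₂ hq₁
  · obtain ⟨q, hq₁, hq₂⟩ := exists_rat_btwn h
    exact hupp n q hq₁ hq₂

end IsMarkovChain

end MarkovChain

section FluctKernel

variable {ν νc : Measure ℝ} {G Gc : ℝ → ℝ}

theorem Ioc_zero_ae_eq_Iic {m : Measure ℝ} (h0 : m (Iic 0) = 0) (x : ℝ) : Ioc 0 x =ᵐ[m] Iic x := by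
  rw [show Ioc 0 x = Iic x \ Iic 0 by ext; simp [and_comm]]
  exact sdiff_null_ae_eq_self h0

theorem measurable_cond_Ioc (m : Measure ℝ) : Measurable fun x : ℝ => m[|Ioc 0 x] := by
  refine Measure.measurable_of_measurable_coe _ fun A hA => ?_
  simp only [cond_apply measurableSet_Ioc]
  exact (Antitone.measurable fun a b hab => ENNReal.inv_le_inv.2
      (measure_mono (Ioc_subset_Ioc_right hab))).mul
    (Monotone.measurable fun a b hab =>
      measure_mono (inter_subset_inter_left _ (Ioc_subset_Ioc_right hab)))

theorem measurable_fluctKernel (hν : ∀ x, 0 ≤ x → ν (Iic x) = ENNReal.ofReal (G x))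
    (hνc : ∀ x, 0 ≤ x → νc (Iic x) = ENNReal.ofReal (Gc x)) (hν0 : ν (Iic 0) = 0)
    (hνc0 : νc (Iic 0) = 0) :
    Measurable (fluctKernel ν νc G Gc) := by
  have hcond : fluctKernel ν νc G Gc = fun x => if 0 < x then (νc[|Ioc 0 x]).map Neg.neg
      else if x < 0 then ν[|Ioc 0 (-x)] else Measure.dirac 0 := by
    funext x
    unfold fluctKernel
    split_ifs with hpos hneg
    · rw [← hνc x hpos.le, ← measure_congr (Ioc_zero_ae_eq_Iic hνc0 x)]; rfl
    · rw [← hν (-x) (neg_nonneg.2 hneg.le), ← measure_congr (Ioc_zero_ae_eq_Iic hν0 (-x))]; rfl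
    · rfl
  rw [hcond]
  exact Measurable.ite measurableSet_Ioi
    ((Measure.measurable_map _ measurable_neg).comp (measurable_cond_Ioc νc))
    (Measurable.ite measurableSet_Iio ((measurable_cond_Ioc ν).comp measurable_neg)
      measurable_const)

theorem fluctKernel_compl_uIcc (x : ℝ) : fluctKernel ν νc G Gc x (uIcc 0 (-x))ᶜ = 0 := by
  rcases lt_trichotomy x 0 with hx | rfl | hx
  · rw [fluctKernel, if_neg hx.not_gt, if_pos hx, Measure.smul_apply,
      Measure.restrict_apply measurableSet_uIcc.compl, uIcc_of_le (neg_nonneg.2 hx.le),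
      (disjoint_compl_left.mono_right Ioc_subset_Icc_self).inter_eq]
    simp
  · simp [fluctKernel]
  · rw [fluctKernel, if_pos hx, Measure.map_apply measurable_neg measurableSet_uIcc.compl,
      Measure.smul_apply, Measure.restrict_apply (measurableSet_uIcc.compl.preimage measurable_neg),
      uIcc_of_ge (neg_nonpos.2 hx.le), preimage_compl,
      (disjoint_compl_left.mono_right (show Ioc 0 x ⊆ Neg.neg ⁻¹' Icc (-x) 0 from
        fun w hw => ⟨neg_le_neg hw.2, neg_nonpos.2 hw.1.le⟩)).inter_eq]
    simp

theorem fluctKernel_eq_map_neg (x : ℝ) :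
    fluctKernel ν νc G Gc x = (fluctKernel νc ν Gc G (-x)).map Neg.neg := by
  rcases lt_trichotomy x 0 with hx | rfl | hx
  · rw [fluctKernel, fluctKernel, if_neg hx.not_gt, if_pos hx, if_pos (neg_pos.2 hx),
      Measure.map_map measurable_neg measurable_neg]
    simp
  · simp [fluctKernel, Measure.map_dirac' measurable_neg]
  · rw [fluctKernel, fluctKernel, if_pos hx, if_neg (neg_neg_of_pos hx).not_gt,
      if_pos (neg_neg_of_pos hx), neg_neg]

theorem lintegral_fluctKernel_of_pos {x : ℝ} (hx : 0 < x) (h : ℝ → ℝ≥0∞) :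
    ∫⁻ w, h w ∂fluctKernel ν νc G Gc x
      = (ENNReal.ofReal (Gc x))⁻¹ * ∫⁻ y in Ioc 0 x, h (-y) ∂νc := by
  rw [fluctKernel, if_pos hx, measurableEmbedding_neg.lintegral_map, lintegral_smul_measure,
    smul_eq_mul]

theorem prodIter_fluctKernel_neg (f : ℝ → ℝ≥0∞) (k : ℕ) (x : ℝ) :
    prodIter (fluctKernel ν νc G Gc) f k x
      = prodIter (fluctKernel νc ν Gc G) (fun w => f (-w)) k (-x) := by
  induction k generalizing x with
  | zero => rfl
  | succ k ih =>
    rw [prodIter_succ, prodIter_succ, fluctKernel_eq_map_neg, measurableEmbedding_neg.lintegral_map]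
    simp only [ih, neg_neg]

end FluctKernel

theorem sum_Icc_mem_Icc_of_mem_uIcc {W : ℕ → ℝ} (h₁ : 0 ≤ W 1)
    (hW : ∀ n, W (n + 2) ∈ uIcc 0 (-W (n + 1))) (N : ℕ) :
    ∑ m ∈ Finset.Icc 1 N, W m ∈ Icc 0 (W 1) := by
  -- each new partial sum lies between the two previous ones
  suffices h : ∀ N, ∑ m ∈ Finset.Icc 1 N, W m ∈ Icc 0 (W 1) ∧
      ∑ m ∈ Finset.Icc 1 (N + 1), W m ∈ Icc 0 (W 1) from (h N).1
  intro N
  induction N with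
  | zero => simp [h₁]
  | succ N ih =>
    refine ⟨ih.2, ?_⟩
    obtain ⟨⟨hlo, hhi⟩, ⟨hlo', hhi'⟩⟩ := ih
    rw [Finset.sum_Icc_succ_top (by omega)] at hlo' hhi'
    rw [Finset.sum_Icc_succ_top (by omega), Finset.sum_Icc_succ_top (by omega)]
    rcases mem_uIcc.1 (hW N) with ⟨h, h'⟩ | ⟨h, h'⟩ <;> constructor <;> linarith

theorem sum_Icc_one_succ (W : ℕ → ℝ) (k : ℕ) :
    ∑ m ∈ Finset.Icc 1 (k + 1), W m = W 1 + ∑ j ∈ Finset.range k, W (j + 2) := by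
  induction k with
  | zero => simp
  | succ k ih => rw [Finset.sum_Icc_succ_top (by omega), ih, Finset.sum_range_succ, add_assoc]

section PhiFn

variable {Ω : Type*} [MeasurableSpace Ω] {P : Measure Ω} {Z₁ S : Ω → ℝ}

theorem phiFn_nonneg (P : Measure Ω) (Z₁ S : Ω → ℝ) (c lam : ℝ) : 0 ≤ phiFn P Z₁ S c lam :=
  integral_nonneg fun ω => by dsimp only; split_ifs <;> positivity

theorem measurable_phiFn_integrand (hZ₁ : Measurable Z₁) (hS : Measurable S) (c lam : ℝ) :
    Measurable fun ω => if Z₁ ω ≤ c then Real.exp (-(lam * S ω)) else 0 :=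
  Measurable.ite (measurableSet_le hZ₁ measurable_const) (by fun_prop) measurable_const

theorem neg_mul_le_abs_mul {a s c : ℝ} (hs : 0 ≤ s) (hsc : s ≤ c) : -(a * s) ≤ |a| * c := by
  refine (neg_le_abs _).trans ?_
  rw [abs_mul, abs_of_nonneg hs]
  exact mul_le_mul_of_nonneg_left hsc (abs_nonneg _)

theorem phiFn_integrand_le {z s c lam : ℝ} (hs : s ∈ Icc 0 z) :
    (if z ≤ c then Real.exp (-(lam * s)) else 0) ≤ if z ≤ c then Real.exp (|lam| * c) else 0 := by
  split_ifs with hz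
  · exact Real.exp_le_exp.2 (neg_mul_le_abs_mul hs.1 (hs.2.trans hz))
  · exact le_rfl

theorem norm_phiFn_integrand_le {z s c lam : ℝ} (hs : s ∈ Icc 0 z) :
    ‖if z ≤ c then Real.exp (-(lam * s)) else 0‖ ≤ Real.exp (|lam| * c) := by
  refine (Real.norm_of_nonneg (by split_ifs <;> positivity)).trans_le
    ((phiFn_integrand_le hs).trans ?_)
  split_ifs
  exacts [le_rfl, by positivity]

theorem integrable_phiFn_integrand [IsFiniteMeasure P] (hZ₁ : Measurable Z₁) (hS : Measurable S)
    (hSZ : ∀ᵐ ω ∂P, S ω ∈ Icc 0 (Z₁ ω)) (c lam : ℝ) :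
    Integrable (fun ω => if Z₁ ω ≤ c then Real.exp (-(lam * S ω)) else 0) P := by
  refine (integrable_const (Real.exp (|lam| * c))).mono'
    (measurable_phiFn_integrand hZ₁ hS c lam).aestronglyMeasurable ?_
  filter_upwards [hSZ] with ω hω using norm_phiFn_integrand_le hω

theorem phiFn_le [IsFiniteMeasure P] (hZ₁ : Measurable Z₁) (hS : Measurable S)
    (hSZ : ∀ᵐ ω ∂P, S ω ∈ Icc 0 (Z₁ ω)) (c lam : ℝ) :
    phiFn P Z₁ S c lam ≤ Real.exp (|lam| * c) * P.real (Z₁ ⁻¹' Iic c) := by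
  have hset : MeasurableSet (Z₁ ⁻¹' Iic c) := measurableSet_Iic.preimage hZ₁
  calc phiFn P Z₁ S c lam
      ≤ ∫ ω, (Z₁ ⁻¹' Iic c).indicator (fun _ => Real.exp (|lam| * c)) ω ∂P :=
        integral_mono_ae (integrable_phiFn_integrand hZ₁ hS hSZ c lam)
          ((integrable_const _).indicator hset) (hSZ.mono fun ω hω => phiFn_integrand_le hω)
    _ = _ := by rw [integral_indicator_const _ hset, smul_eq_mul, mul_comm]

theorem tendsto_phiFn [IsFiniteMeasure P] {Sn : ℕ → Ω → ℝ} {F : Ω → ℝ} (hZ₁ : Measurable Z₁)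
    (hSn : ∀ N, Measurable (Sn N)) (hSZ : ∀ᵐ ω ∂P, ∀ N, Sn N ω ∈ Icc 0 (Z₁ ω))
    (hF : ∀ᵐ ω ∂P, Tendsto (fun N => Sn N ω) atTop (nhds (F ω))) (c lam : ℝ) :
    Tendsto (fun N => phiFn P Z₁ (Sn N) c lam) atTop (nhds (phiFn P Z₁ F c lam)) := by
  refine tendsto_integral_of_dominated_convergence (fun _ => Real.exp (|lam| * c))
    (fun N => (measurable_phiFn_integrand hZ₁ (hSn N) c lam).aestronglyMeasurable)
    (integrable_const _) (fun N => ?_) ?_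
  · filter_upwards [hSZ] with ω hω using norm_phiFn_integrand_le (hω N)
  · filter_upwards [hF] with ω hω
    split_ifs
    · exact (Real.continuous_exp.tendsto _).comp (hω.const_mul lam).neg
    · exact tendsto_const_nhds

end PhiFn

section Fluctuation

variable {Ω : Type*} [MeasurableSpace Ω] {P : Measure Ω} {ν νc : Measure ℝ} {G Gc : ℝ → ℝ}
  {Z Zc : ℕ → Ω → ℝ}

noncomputable def expWeight (lam w : ℝ) : ℝ≥0∞ := ENNReal.ofReal (Real.exp (-(lam * w)))

theorem measurable_expWeight (lam : ℝ) : Measurable (expWeight lam) := by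
  unfold expWeight; fun_prop

theorem expWeight_neg (lam w : ℝ) : expWeight lam (-w) = expWeight (-lam) w := by
  simp only [expWeight, mul_neg, neg_mul]

def partialSum (Z : ℕ → Ω → ℝ) (N : ℕ) (ω : Ω) : ℝ := ∑ m ∈ Finset.Icc 1 N, Z m ω

theorem measurable_partialSum (hZ : ∀ n, Measurable (Z n)) (N : ℕ) :
    Measurable (partialSum Z N) :=
  Finset.measurable_sum _ fun m _ => hZ m

theorem ofReal_phiFn_partialSum [IsFiniteMeasure P] {κ : ℝ → Measure ℝ}
    (hZ : IsMarkovChain P Z ν κ) (hκ : Measurable κ)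
    (hS : ∀ᵐ ω ∂P, ∀ N, partialSum Z N ω ∈ Icc 0 (Z 1 ω)) (k : ℕ) (c lam : ℝ) :
    ENNReal.ofReal (phiFn P (Z 1) (partialSum Z (k + 1)) c lam)
      = ∫⁻ y in Iic c, expWeight lam y * prodIter κ (expWeight lam) k y ∂ν := by
  have hfactor (ω : Ω) :
      ENNReal.ofReal (if Z 1 ω ≤ c then Real.exp (-(lam * partialSum Z (k + 1) ω)) else 0)
        = (Iic c).indicator (expWeight lam) (Z 1 ω)
          * ∏ j ∈ Finset.range k, expWeight lam (Z (j + 2) ω) := by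
    by_cases hc : Z 1 ω ≤ c
    · rw [if_pos hc, indicator_of_mem (mem_Iic.2 hc), expWeight, partialSum, sum_Icc_one_succ,
        mul_add, Finset.mul_sum, neg_add, ← Finset.sum_neg_distrib, Real.exp_add, Real.exp_sum,
        ENNReal.ofReal_mul (Real.exp_nonneg _),
        ENNReal.ofReal_prod_of_nonneg fun _ _ => Real.exp_nonneg _]
      rfl
    · rw [if_neg hc, indicator_of_notMem (notMem_Iic.2 (not_le.1 hc)), ENNReal.ofReal_zero,
        zero_mul]
  rw [phiFn, ofReal_integral_eq_lintegral_ofReal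
      (integrable_phiFn_integrand (hZ.measurable 1) (measurable_partialSum hZ.measurable _)
        (hS.mono fun _ h => h _) c lam)
      (ae_of_all _ fun ω => by dsimp only; split_ifs <;> positivity),
    lintegral_congr hfactor, hZ.lintegral_comp_mul_prod hκ (measurable_expWeight lam)
      ((measurable_expWeight lam).indicator measurableSet_Iic),
    ← lintegral_indicator measurableSet_Iic]
  simp_rw [indicator_mul_left]

theorem ae_partialSum_mem_Icc (hZ : IsMarkovChain P Z ν (fluctKernel ν νc G Gc))
    (hν0 : ν (Iic 0) = 0) :
    ∀ᵐ ω ∂P, ∀ N, partialSum Z N ω ∈ Icc 0 (Z 1 ω) := by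
  have hpos : ∀ᵐ ω ∂P, 0 ≤ Z 1 ω := by
    have hν : ∀ᵐ y ∂ν, 0 ≤ y := measure_mono_null (fun y (hy : ¬0 ≤ y) => (not_le.1 hy).le) hν0
    rw [← hZ.map_one] at hν
    exact ae_of_ae_map (hZ.measurable 1).aemeasurable hν
  have hstep := hZ.ae_forall_mem_Icc (l := fun x => 0 ⊓ -x) (u := fun x => 0 ⊔ -x)
    (by fun_prop) (by fun_prop) fun x => fluctKernel_compl_uIcc x
  filter_upwards [hpos, hstep] with ω h₁ hstep N using sum_Icc_mem_Icc_of_mem_uIcc h₁ hstep N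

theorem prodIter_fluctKernel_succ [IsFiniteMeasure P]
    (hZc : IsMarkovChain P Zc νc (fluctKernel νc ν Gc G)) (hκc : Measurable (fluctKernel νc ν Gc G))
    (hνc0 : νc (Iic 0) = 0) (k : ℕ) (lam : ℝ) {y : ℝ} (hy : 0 < y) (hGc : 0 < Gc y) :
    prodIter (fluctKernel ν νc G Gc) (expWeight lam) (k + 1) y
      = ENNReal.ofReal (phiFn P (Zc 1) (partialSum Zc (k + 1)) y (-lam) / Gc y) := by
  rw [ENNReal.ofReal_div_of_pos hGc, div_eq_mul_inv, mul_comm,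
    ofReal_phiFn_partialSum hZc hκc (ae_partialSum_mem_Icc hZc hνc0),
    ← setLIntegral_congr (Ioc_zero_ae_eq_Iic hνc0 y), prodIter_succ,
    lintegral_fluctKernel_of_pos hy]
  congr 1
  refine lintegral_congr fun u => ?_
  rw [prodIter_fluctKernel_neg, neg_neg]
  simp only [expWeight_neg]

theorem phiFn_partialSum_eq_integral [IsFiniteMeasure P] {κ : ℝ → Measure ℝ}
    (hZ : IsMarkovChain P Z ν κ) (hκ : Measurable κ)
    (hS : ∀ᵐ ω ∂P, ∀ N, partialSum Z N ω ∈ Icc 0 (Z 1 ω)) (hν0 : ν (Iic 0) = 0) (k : ℕ) (c lam : ℝ)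
    (hfin : ∀ y ∈ Ioc 0 c, prodIter κ (expWeight lam) k y ≠ ⊤) :
    phiFn P (Z 1) (partialSum Z (k + 1)) c lam
      = ∫ y in Ioc 0 c, Real.exp (-(lam * y)) * (prodIter κ (expWeight lam) k y).toReal ∂ν := by
  have hm : Measurable fun y => Real.exp (-(lam * y)) * (prodIter κ (expWeight lam) k y).toReal :=
    (by fun_prop : Measurable fun y : ℝ => Real.exp (-(lam * y))).mul
      (measurable_prodIter hκ (measurable_expWeight lam) k).ennreal_toReal
  rw [← ENNReal.toReal_ofReal (phiFn_nonneg P _ _ c lam), ofReal_phiFn_partialSum hZ hκ hS,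
    ← setLIntegral_congr (Ioc_zero_ae_eq_Iic hν0 c),
    integral_eq_lintegral_of_nonneg_ae (ae_of_all _ fun y => by positivity) hm.aestronglyMeasurable]
  congr 1
  refine setLIntegral_congr_fun measurableSet_Ioc fun y hy => ?_
  rw [ENNReal.ofReal_mul (Real.exp_nonneg _), ENNReal.ofReal_toReal (hfin y hy)]
  rfl

theorem phiFn_le_exp_mul_cdf [IsFiniteMeasure P] {Z₁ S : Ω → ℝ} (hZ₁ : Measurable Z₁)
    (hS : Measurable S) (hmap : P.map Z₁ = ν) (hν : ∀ x, 0 ≤ x → ν (Iic x) = ENNReal.ofReal (G x))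
    (hSZ : ∀ᵐ ω ∂P, S ω ∈ Icc 0 (Z₁ ω)) {c : ℝ} (hc : 0 ≤ c) (hGc : 0 ≤ G c) (lam : ℝ) :
    phiFn P Z₁ S c lam ≤ Real.exp (|lam| * c) * G c := by
  refine (phiFn_le hZ₁ hS hSZ c lam).trans_eq ?_
  rw [← map_measureReal_apply hZ₁ measurableSet_Iic, hmap, measureReal_def, hν c hc,
    ENNReal.toReal_ofReal hGc]

theorem tendsto_integral_prodIter_fluctKernel [IsFiniteMeasure P] [IsFiniteMeasure ν]
    (hZc : IsMarkovChain P Zc νc (fluctKernel νc ν Gc G)) (hκ : Measurable (fluctKernel ν νc G Gc))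
    (hκc : Measurable (fluctKernel νc ν Gc G))
    (hνc : ∀ x, 0 ≤ x → νc (Iic x) = ENNReal.ofReal (Gc x)) (hνc0 : νc (Iic 0) = 0)
    (hGcpos : ∀ y, 0 < y → 0 < Gc y) {Fc : Ω → ℝ}
    (hFc : ∀ᵐ ω ∂P, Tendsto (fun N => partialSum Zc N ω) atTop (nhds (Fc ω))) (lam x : ℝ) :
    Tendsto (fun k => ∫ y in Ioc 0 x, Real.exp (-(lam * y))
        * (prodIter (fluctKernel ν νc G Gc) (expWeight lam) (k + 1) y).toReal ∂ν)
      atTop (nhds (∫ y in Ioc 0 x,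
        Real.exp (-(lam * y)) * (phiFn P (Zc 1) Fc y (-lam) / Gc y) ∂ν)) := by
  have hSc := ae_partialSum_mem_Icc hZc hνc0
  have hT (k : ℕ) {y : ℝ} (hy : y ∈ Ioc 0 x) :
      (prodIter (fluctKernel ν νc G Gc) (expWeight lam) (k + 1) y).toReal
        = phiFn P (Zc 1) (partialSum Zc (k + 1)) y (-lam) / Gc y := by
    rw [prodIter_fluctKernel_succ hZc hκc hνc0 k lam hy.1 (hGcpos y hy.1),
      ENNReal.toReal_ofReal (div_nonneg (phiFn_nonneg _ _ _ _ _) (hGcpos y hy.1).le)]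
  have hbound (k : ℕ) {y : ℝ} (hy : y ∈ Ioc 0 x) :
      (prodIter (fluctKernel ν νc G Gc) (expWeight lam) (k + 1) y).toReal
        ≤ Real.exp (|lam| * x) := by
    rw [hT k hy, div_le_iff₀ (hGcpos y hy.1), ← abs_neg]
    refine (phiFn_le_exp_mul_cdf (hZc.measurable 1) (measurable_partialSum hZc.measurable _)
      hZc.map_one hνc (hSc.mono fun _ h => h _) hy.1.le (hGcpos y hy.1).le (-lam)).trans ?_
    exact mul_le_mul_of_nonneg_right (Real.exp_le_exp.2 (mul_le_mul_of_nonneg_left hy.2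
      (abs_nonneg _))) (hGcpos y hy.1).le
  refine tendsto_integral_of_dominated_convergence
    (fun _ => Real.exp (|lam| * x) * Real.exp (|lam| * x))
    (fun k => ((by fun_prop : Measurable fun y : ℝ => Real.exp (-(lam * y))).mul
      (measurable_prodIter hκ (measurable_expWeight lam) (k + 1)).ennreal_toReal
      ).aestronglyMeasurable)
    (integrable_const _) (fun k => ?_) ?_
  · filter_upwards [ae_restrict_mem measurableSet_Ioc] with y hy
    rw [norm_mul, Real.norm_of_nonneg (Real.exp_nonneg _),
      Real.norm_of_nonneg ENNReal.toReal_nonneg]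
    exact mul_le_mul (Real.exp_le_exp.2 (neg_mul_le_abs_mul hy.1.le hy.2)) (hbound k hy)
      ENNReal.toReal_nonneg (Real.exp_nonneg _)
  · filter_upwards [ae_restrict_mem measurableSet_Ioc] with y hy
    simp only [hT _ hy]
    exact (((tendsto_phiFn (hZc.measurable 1) (measurable_partialSum hZc.measurable) hSc hFc y
      (-lam)).comp (tendsto_add_atTop_nat 1)).div_const _).const_mul _

theorem phiFn_eq_integral [IsFiniteMeasure P] [IsFiniteMeasure ν]
    (hZ : IsMarkovChain P Z ν (fluctKernel ν νc G Gc))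
    (hZc : IsMarkovChain P Zc νc (fluctKernel νc ν Gc G))
    (hν : ∀ x, 0 ≤ x → ν (Iic x) = ENNReal.ofReal (G x))
    (hνc : ∀ x, 0 ≤ x → νc (Iic x) = ENNReal.ofReal (Gc x)) (hG0 : G 0 = 0) (hGc0 : Gc 0 = 0)
    (hGcpos : ∀ y, 0 < y → 0 < Gc y) {F Fc : Ω → ℝ}
    (hF : ∀ᵐ ω ∂P, Tendsto (fun N => partialSum Z N ω) atTop (nhds (F ω)))
    (hFc : ∀ᵐ ω ∂P, Tendsto (fun N => partialSum Zc N ω) atTop (nhds (Fc ω))) (lam x : ℝ) :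
    phiFn P (Z 1) F x lam
      = ∫ y in Ioc 0 x, Real.exp (-(lam * y)) * (phiFn P (Zc 1) Fc y (-lam) / Gc y) ∂ν := by
  have hν0 : ν (Iic 0) = 0 := by rw [hν 0 le_rfl, hG0, ENNReal.ofReal_zero]
  have hνc0 : νc (Iic 0) = 0 := by rw [hνc 0 le_rfl, hGc0, ENNReal.ofReal_zero]
  have hκ := measurable_fluctKernel hν hνc hν0 hνc0
  have hκc := measurable_fluctKernel hνc hν hνc0 hν0
  have hS := ae_partialSum_mem_Icc hZ hν0
  have hlhs : Tendsto (fun k => phiFn P (Z 1) (partialSum Z (k + 2)) x lam) atTop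
      (nhds (phiFn P (Z 1) F x lam)) :=
    (tendsto_phiFn (hZ.measurable 1) (measurable_partialSum hZ.measurable) hS hF x lam).comp
      (tendsto_add_atTop_nat 2)
  refine tendsto_nhds_unique (hlhs.congr fun k => ?_)
    (tendsto_integral_prodIter_fluctKernel hZc hκ hκc hνc hνc0 hGcpos hFc lam x)
  exact phiFn_partialSum_eq_integral hZ hκ hS hν0 (k + 1) x lam fun y hy =>
    (prodIter_fluctKernel_succ hZc hκc hνc0 k lam hy.1 (hGcpos y hy.1)).trans_ne
      ENNReal.ofReal_ne_top

end Fluctuation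

theorem statement1_general
    {Ω : Type*} [MeasurableSpace Ω] (P : Measure Ω) [IsProbabilityMeasure P]
    (H Hc : ℝ → ℝ) (μ μc : Measure ℝ)
    [IsProbabilityMeasure μ] [IsProbabilityMeasure μc]
    (hH0 : H 0 = 0) (hHc0 : Hc 0 = 0)
    (hHpos : ∀ x : ℝ, 0 < x → 0 < H x) (hHcpos : ∀ x : ℝ, 0 < x → 0 < Hc x)
    (hμ : ∀ x : ℝ, 0 ≤ x → μ (Set.Iic x) = ENNReal.ofReal (H x))
    (hμc : ∀ x : ℝ, 0 ≤ x → μc (Set.Iic x) = ENNReal.ofReal (Hc x))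
    -- the chain `Z` and its a.s. sum `F`
    (Z : ℕ → Ω → ℝ) (hZmeas : ∀ n, Measurable (Z n))
    (hinit : P.map (Z 1) = μ)
    (hmarkov : ∀ (n : ℕ) (s : Set (Fin (n + 1) → ℝ)) (A : Set ℝ),
      MeasurableSet s → MeasurableSet A →
      P ({ω | (fun i : Fin (n + 1) => Z (i.1 + 1) ω) ∈ s} ∩ {ω | Z (n + 2) ω ∈ A})
        = ∫⁻ ω in {ω | (fun i : Fin (n + 1) => Z (i.1 + 1) ω) ∈ s},
            fluctKernel μ μc H Hc (Z (n + 1) ω) A ∂P)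
    (F : Ω → ℝ)
    (hF : ∀ᵐ ω ∂P,
      Tendsto (fun N => ∑ n ∈ Finset.Icc 1 N, Z n ω) atTop (nhds (F ω)) ∧
      F ω ∈ Set.Icc 0 (Z 1 ω))
    -- the dual chain `Ž` (roles of `H` and `Ȟ` exchanged) and its a.s. sum `F̌`
    (Zc : ℕ → Ω → ℝ) (hZcmeas : ∀ n, Measurable (Zc n))
    (hinitc : P.map (Zc 1) = μc)
    (hmarkovc : ∀ (n : ℕ) (s : Set (Fin (n + 1) → ℝ)) (A : Set ℝ),
      MeasurableSet s → MeasurableSet A →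
      P ({ω | (fun i : Fin (n + 1) => Zc (i.1 + 1) ω) ∈ s} ∩ {ω | Zc (n + 2) ω ∈ A})
        = ∫⁻ ω in {ω | (fun i : Fin (n + 1) => Zc (i.1 + 1) ω) ∈ s},
            fluctKernel μc μ Hc H (Zc (n + 1) ω) A ∂P)
    (Fc : Ω → ℝ)
    (hFc : ∀ᵐ ω ∂P,
      Tendsto (fun N => ∑ n ∈ Finset.Icc 1 N, Zc n ω) atTop (nhds (Fc ω)) ∧
      Fc ω ∈ Set.Icc 0 (Zc 1 ω)) :
    ∀ (lam x : ℝ), 0 < x →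
      phiFn P (Z 1) F x lam
        = (∫ y in Set.Ioc (0:ℝ) x,
            Real.exp (-(lam * y)) * (phiFn P (Zc 1) Fc y (-lam) / Hc y) ∂μ) ∧
      phiFn P (Zc 1) Fc x lam
        = (∫ y in Set.Ioc (0:ℝ) x,
            Real.exp (-(lam * y)) * (phiFn P (Z 1) F y (-lam) / H y) ∂μc) := by
  intro lam x _
  have hZ : IsMarkovChain P Z μ (fluctKernel μ μc H Hc) := ⟨hZmeas, hinit, hmarkov⟩
  have hZc : IsMarkovChain P Zc μc (fluctKernel μc μ Hc H) := ⟨hZcmeas, hinitc, hmarkovc⟩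
  have hlim := hF.mono fun _ h => h.1
  have hlimc := hFc.mono fun _ h => h.1
  exact ⟨phiFn_eq_integral hZ hZc hμ hμc hH0 hHc0 hHcpos hlim hlimc lam x,
    phiFn_eq_integral hZc hZ hμc hμ hHc0 hH0 hHpos hlimc hlim lam x⟩

/-- With `(Z_n)` the Markov chain of initial law `μ` (c.d.f. `H`) and kernel
`fluctKernel μ μ̌ H Ȟ`, `F = Σ_{n≥1} Z_n`, `φ(x,λ) = E[1_{Z₁ ≤ x} e^{-λF}]`, and
`(Ž_n), F̌, φ̌` the corresponding objects with `H` and `Ȟ` exchanged, one has for all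
real `λ` and all `x > 0`:
`φ(x,λ) = ∫_{(0,x]} e^{-λy} (φ̌(y,-λ)/Ȟ(y)) μ(dy)` and
`φ̌(x,λ) = ∫_{(0,x]} e^{-λy} (φ(y,-λ)/H(y)) μ̌(dy)`. -/
theorem statement1
    {Ω : Type*} [MeasurableSpace Ω] (P : Measure Ω) [IsProbabilityMeasure P]
    (H Hc : ℝ → ℝ) (μ μc : Measure ℝ)
    [IsProbabilityMeasure μ] [IsProbabilityMeasure μc]
    (hHcont : ContinuousOn H (Set.Ici 0)) (hHccont : ContinuousOn Hc (Set.Ici 0))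
    (hHmono : MonotoneOn H (Set.Ici 0)) (hHcmono : MonotoneOn Hc (Set.Ici 0))
    (hH0 : H 0 = 0) (hHc0 : Hc 0 = 0)
    (hHpos : ∀ x : ℝ, 0 < x → 0 < H x) (hHcpos : ∀ x : ℝ, 0 < x → 0 < Hc x)
    (hHle : ∀ x : ℝ, 0 ≤ x → H x ≤ 1) (hHcle : ∀ x : ℝ, 0 ≤ x → Hc x ≤ 1)
    (hHlim : Tendsto H atTop (nhds 1)) (hHclim : Tendsto Hc atTop (nhds 1))
    (hμ : ∀ x : ℝ, 0 ≤ x → μ (Set.Iic x) = ENNReal.ofReal (H x))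
    (hμc : ∀ x : ℝ, 0 ≤ x → μc (Set.Iic x) = ENNReal.ofReal (Hc x))
    -- the chain `Z` and its a.s. sum `F`
    (Z : ℕ → Ω → ℝ) (hZmeas : ∀ n, Measurable (Z n))
    (hinit : P.map (Z 1) = μ)
    (hmarkov : ∀ (n : ℕ) (s : Set (Fin (n + 1) → ℝ)) (A : Set ℝ),
      MeasurableSet s → MeasurableSet A →
      P ({ω | (fun i : Fin (n + 1) => Z (i.1 + 1) ω) ∈ s} ∩ {ω | Z (n + 2) ω ∈ A})
        = ∫⁻ ω in {ω | (fun i : Fin (n + 1) => Z (i.1 + 1) ω) ∈ s},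
            fluctKernel μ μc H Hc (Z (n + 1) ω) A ∂P)
    (F : Ω → ℝ) (hFmeas : Measurable F)
    (hF : ∀ᵐ ω ∂P,
      Tendsto (fun N => ∑ n ∈ Finset.Icc 1 N, Z n ω) atTop (nhds (F ω)) ∧
      F ω ∈ Set.Icc 0 (Z 1 ω))
    -- the dual chain `Ž` (roles of `H` and `Ȟ` exchanged) and its a.s. sum `F̌`
    (Zc : ℕ → Ω → ℝ) (hZcmeas : ∀ n, Measurable (Zc n))
    (hinitc : P.map (Zc 1) = μc)
    (hmarkovc : ∀ (n : ℕ) (s : Set (Fin (n + 1) → ℝ)) (A : Set ℝ),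
      MeasurableSet s → MeasurableSet A →
      P ({ω | (fun i : Fin (n + 1) => Zc (i.1 + 1) ω) ∈ s} ∩ {ω | Zc (n + 2) ω ∈ A})
        = ∫⁻ ω in {ω | (fun i : Fin (n + 1) => Zc (i.1 + 1) ω) ∈ s},
            fluctKernel μc μ Hc H (Zc (n + 1) ω) A ∂P)
    (Fc : Ω → ℝ) (hFcmeas : Measurable Fc)
    (hFc : ∀ᵐ ω ∂P,
      Tendsto (fun N => ∑ n ∈ Finset.Icc 1 N, Zc n ω) atTop (nhds (Fc ω)) ∧
      Fc ω ∈ Set.Icc 0 (Zc 1 ω)) :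
    ∀ (lam x : ℝ), 0 < x →
      phiFn P (Z 1) F x lam
        = (∫ y in Set.Ioc (0:ℝ) x,
            Real.exp (-(lam * y)) * (phiFn P (Zc 1) Fc y (-lam) / Hc y) ∂μ) ∧
      phiFn P (Zc 1) Fc x lam
        = (∫ y in Set.Ioc (0:ℝ) x,
            Real.exp (-(lam * y)) * (phiFn P (Z 1) F y (-lam) / H y) ∂μc) :=
  statement1_general P H Hc μ μc hH0 hHc0 hHpos hHcpos hμ hμc Z hZmeas hinit hmarkov F hF Zc hZcmeas
    hinitc hmarkovc Fc hFc
end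

section
/- For all γ, δ > 0 and all u ∈ ℝ: γ β̂_{γ,δ+1}(u) + u β̂_{γ,δ+1}′(u) = γ e^{−u} β̂_{δ,γ+1}(−u), and δ β̂_{δ,γ+1}(u) + u β̂_{δ,γ+1}′(u) = δ e^{−u} β̂_{γ,δ+1}(−u), where ′ denotes the derivative with respect to u. -/
/-!
Differentiating under the integral sign, `a β̂_{a,b+1}(u) + u β̂'_{a,b+1}(u)` is
`∫₀¹ e^{-ut} (a - ut) β_{a,b+1}(t) dt`. Since `β_{a+1,b+1}' = (a+b+1)(β_{a,b+1} - β_{a+1,b})` and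
`a β_{a+1,b+1}(t) = (a+b+1) t β_{a,b+1}(t)`, integrating the derivative of `e^{-ut} β_{a+1,b+1}(t)`,
which vanishes at both ends, turns this into `a β̂_{a+1,b}(u)`. The substitution `t ↦ 1 - t` gives
`β̂_{b,a+1}(-u) = e^u β̂_{a+1,b}(u)`.
-/

open Filter Set

/-- The Beta(a,b) density on `[0,1]`: `β_{a,b}(t) = Γ(a+b)/(Γ(a)Γ(b)) t^(a-1) (1-t)^(b-1)`. -/
noncomputable def betaDens (a b t : ℝ) : ℝ :=
  (Real.Gamma (a + b) / (Real.Gamma a * Real.Gamma b)) * t ^ (a - 1) * (1 - t) ^ (b - 1)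

/-- `β̂_{a,b}(λ) = ∫_0^1 e^{-λ t} β_{a,b}(t) dt`. -/
noncomputable def betaHat (a b lam : ℝ) : ℝ :=
  ∫ t in (0:ℝ)..1, Real.exp (-lam * t) * betaDens a b t

open MeasureTheory Real

lemma intervalIntegrable_betaDens {a b : ℝ} (ha : 0 < a) (hb : 0 < b) :
    IntervalIntegrable (betaDens a b) volume 0 1 := by
  have hc := (Complex.betaIntegral_convergent (u := a) (v := b) (by simpa) (by simpa)).norm
  refine (hc.const_mul (Gamma (a + b) / (Gamma a * Gamma b))).congr_uIoo fun t ht => ?_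
  rw [uIoo_of_le zero_le_one] at ht
  have h1t : (1 : ℂ) - t = ((1 - t : ℝ) : ℂ) := by push_cast; ring
  simp only [norm_mul, h1t, Complex.norm_cpow_eq_rpow_re_of_pos ht.1,
    Complex.norm_cpow_eq_rpow_re_of_pos (sub_pos.2 ht.2), Complex.sub_re, Complex.ofReal_re,
    Complex.one_re, betaDens, mul_assoc]

lemma norm_neg_mul_exp_neg_mul_le {t x u : ℝ} (ht : t ∈ Ioc (0 : ℝ) 1) (hx : dist x u < 1) :
    ‖-t * exp (-x * t)‖ ≤ exp (|u| + 1) := by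
  have hxu : |x| ≤ |u| + 1 := by
    linarith [abs_sub_abs_le_abs_sub x u, (Real.dist_eq x u ▸ hx : |x - u| < 1)]
  have hxt : -x * t ≤ |u| + 1 := by
    nlinarith [neg_le_abs x, abs_nonneg x, ht.1, ht.2]
  rw [norm_mul, norm_neg, Real.norm_of_nonneg ht.1.le, Real.norm_of_nonneg (exp_pos _).le]
  calc t * exp (-x * t) ≤ 1 * exp (|u| + 1) :=
        mul_le_mul ht.2 (exp_le_exp.2 hxt) (exp_pos _).le zero_le_one
    _ = exp (|u| + 1) := one_mul _

theorem hasDerivAt_integral_exp_neg_mul {f : ℝ → ℝ} (hf : IntervalIntegrable f volume 0 1)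
    (u : ℝ) :
    HasDerivAt (fun x => ∫ t in (0 : ℝ)..1, exp (-x * t) * f t)
      (∫ t in (0 : ℝ)..1, -t * exp (-u * t) * f t) u := by
  have hmeas : ∀ g : ℝ → ℝ, Continuous g →
      AEStronglyMeasurable (fun t => g t * f t) (volume.restrict (uIoc (0 : ℝ) 1)) :=
    fun g hg => (hf.continuousOn_mul hg.continuousOn).def'.aestronglyMeasurable
  refine (intervalIntegral.hasDerivAt_integral_of_dominated_loc_of_deriv_le
    (F' := fun x t => -t * exp (-x * t) * f t) (bound := fun t => exp (|u| + 1) * ‖f t‖)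
    (Metric.ball_mem_nhds u one_pos)
    (Eventually.of_forall fun x => hmeas (fun t => exp (-x * t)) (by fun_prop))
    (hf.continuousOn_mul (by fun_prop)) (hmeas (fun t => -t * exp (-u * t)) (by fun_prop))
    ?_ (hf.norm.const_mul _) ?_).2
  · refine ae_of_all _ fun t ht x hx => ?_
    rw [uIoc_of_le zero_le_one] at ht
    rw [norm_mul]
    exact mul_le_mul_of_nonneg_right (norm_neg_mul_exp_neg_mul_le ht hx) (norm_nonneg _)
  · refine ae_of_all _ fun t _ x _ => ?_
    have hlin : HasDerivAt (fun x : ℝ => -x * t) (-t) x := by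
      simpa using (hasDerivAt_id x).neg.mul_const t
    exact (hlin.exp.mul_const (f t)).congr_deriv (by ring)

lemma betaDens_one_sub (a b t : ℝ) : betaDens a b (1 - t) = betaDens b a t := by
  simp only [betaDens, sub_sub_cancel, add_comm a b, mul_comm (Gamma a)]
  ring

lemma mul_betaDens_add_one_left {a b t : ℝ} (ha : a ≠ 0) (hab : a + b ≠ 0) (ht : 0 ≤ t) :
    a * betaDens (a + 1) b t = (a + b) * t * betaDens a b t := by
  have hGamma : Gamma (a + 1 + b) = (a + b) * Gamma (a + b) := by
    rw [add_right_comm, Gamma_add_one hab]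
  have hpow : t ^ (a + 1 - 1) = t ^ (a - 1) * t := by
    rw [add_sub_cancel_right, ← rpow_add_one' ht (by simpa using ha), sub_add_cancel]
  simp only [betaDens, hGamma, Gamma_add_one ha, hpow]
  rcases eq_or_ne (Gamma a) 0 with h | h
  · simp [h]
  · field_simp

lemma betaDens_add_one_add_one (a b : ℝ) :
    betaDens (a + 1) (b + 1) =
      fun t => Gamma (a + 1 + (b + 1)) / (Gamma (a + 1) * Gamma (b + 1)) *
        (t ^ a * (1 - t) ^ b) := by
  ext t
  simp only [betaDens, add_sub_cancel_right]
  ring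

lemma continuous_betaDens_add_one_add_one {a b : ℝ} (ha : 0 ≤ a) (hb : 0 ≤ b) :
    Continuous (betaDens (a + 1) (b + 1)) := by
  rw [betaDens_add_one_add_one]
  fun_prop (disch := assumption)

lemma hasDerivAt_betaDens_add_one_add_one {a b t : ℝ} (ha : 0 < a) (hb : 0 < b)
    (ht : t ∈ Ioo (0 : ℝ) 1) :
    HasDerivAt (betaDens (a + 1) (b + 1))
      ((a + b + 1) * (betaDens a (b + 1) t - betaDens (a + 1) b t)) t := by
  have hpow : HasDerivAt (fun t => t ^ a * (1 - t) ^ b)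
      (a * t ^ (a - 1) * (1 - t) ^ b - t ^ a * (b * (1 - t) ^ (b - 1))) t := by
    have h1t : HasDerivAt (fun t : ℝ => (1 - t) ^ b) (b * (1 - t) ^ (b - 1) * (-1)) t :=
      (hasDerivAt_rpow_const (Or.inl (sub_pos.2 ht.2).ne')).comp t
        ((hasDerivAt_id t).const_sub 1)
    exact ((hasDerivAt_rpow_const (Or.inl ht.1.ne')).mul h1t).congr_deriv (by ring)
  have hGamma : Gamma (a + 1 + (b + 1)) = (a + b + 1) * Gamma (a + (b + 1)) := by
    rw [show a + 1 + (b + 1) = a + b + 1 + 1 by ring, Gamma_add_one (by positivity)]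
    ring_nf
  have hGamma' : Gamma (a + 1 + b) = Gamma (a + (b + 1)) := by ring_nf
  rw [betaDens_add_one_add_one]
  refine (hpow.const_mul _).congr_deriv ?_
  simp only [betaDens, add_sub_cancel_right, hGamma, hGamma', Gamma_add_one ha.ne',
    Gamma_add_one hb.ne']
  field_simp

lemma betaHat_neg (a b u : ℝ) : betaHat b a (-u) = exp u * betaHat a b u := by
  calc betaHat b a (-u) = ∫ t in (0 : ℝ)..1, exp (u * (1 - t)) * betaDens b a (1 - t) := by
        rw [betaHat, intervalIntegral.integral_comp_sub_left
          (fun t => exp (u * t) * betaDens b a t) 1]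
        norm_num
    _ = exp u * betaHat a b u := by
        rw [betaHat, ← intervalIntegral.integral_const_mul]
        congr 1 with t
        rw [betaDens_one_sub, show u * (1 - t) = u + -u * t by ring, exp_add]
        ring

lemma integral_exp_neg_mul_mul_sub_mul_betaDens {a b : ℝ} (ha : 0 < a) (hb : 0 < b) (u : ℝ) :
    ∫ t in (0 : ℝ)..1, exp (-u * t) * (a - u * t) * betaDens a (b + 1) t
      = a * betaHat (a + 1) b u := by
  set g₁ := fun t => exp (-u * t) * (a - u * t) * betaDens a (b + 1) t
  set g₂ := fun t => exp (-u * t) * betaDens (a + 1) b t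
  have hg₁ : IntervalIntegrable g₁ volume 0 1 :=
    (intervalIntegrable_betaDens ha (by positivity)).continuousOn_mul (by fun_prop)
  have hg₂ : IntervalIntegrable g₂ volume 0 1 :=
    (intervalIntegrable_betaDens (by positivity) hb).continuousOn_mul (by fun_prop)
  have hderiv : ∀ t ∈ Ioo (0 : ℝ) 1,
      HasDerivAt (fun t => exp (-u * t) * betaDens (a + 1) (b + 1) t)
        ((a + b + 1) / a * (g₁ t - a * g₂ t)) t := by
    intro t ht
    have hexp : HasDerivAt (fun t => exp (-u * t)) (exp (-u * t) * -u) t := by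
      simpa using ((hasDerivAt_id t).const_mul (-u)).exp
    refine (hexp.mul (hasDerivAt_betaDens_add_one_add_one ha hb ht)).congr_deriv ?_
    have hshift := mul_betaDens_add_one_left (b := b + 1) ha.ne' (by positivity) ht.1.le
    simp only [g₁, g₂]
    field_simp
    linear_combination (-u) * hshift
  have hcont : Continuous fun t => exp (-u * t) * betaDens (a + 1) (b + 1) t :=
    (continuous_exp.comp (continuous_const_mul (-u))).mul
      (continuous_betaDens_add_one_add_one ha.le hb.le)
  have hftc := intervalIntegral.integral_eq_sub_of_hasDerivAt_of_le zero_le_one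
    hcont.continuousOn hderiv
    ((hg₁.sub (hg₂.const_mul a)).const_mul _)
  have hF0 : betaDens (a + 1) (b + 1) 0 = 0 := by
    simp [betaDens_add_one_add_one, zero_rpow ha.ne']
  have hF1 : betaDens (a + 1) (b + 1) 1 = 0 := by
    simp [betaDens_add_one_add_one, zero_rpow hb.ne']
  rw [hF0, hF1, mul_zero, mul_zero, sub_zero, intervalIntegral.integral_const_mul,
    intervalIntegral.integral_sub hg₁ (hg₂.const_mul a), intervalIntegral.integral_const_mul,
    mul_eq_zero, sub_eq_zero] at hftc
  exact hftc.resolve_left (by positivity)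

lemma mul_betaHat_add_mul_deriv {a b : ℝ} (ha : 0 < a) (hb : 0 < b) (u : ℝ) :
    a * betaHat a (b + 1) u + u * deriv (betaHat a (b + 1)) u = a * betaHat (a + 1) b u := by
  have hβ := intervalIntegrable_betaDens ha (by positivity : 0 < b + 1)
  have hderiv : HasDerivAt (betaHat a (b + 1))
      (∫ t in (0 : ℝ)..1, -t * exp (-u * t) * betaDens a (b + 1) t) u :=
    hasDerivAt_integral_exp_neg_mul hβ u
  rw [hderiv.deriv, ← integral_exp_neg_mul_mul_sub_mul_betaDens ha hb, betaHat,
    ← intervalIntegral.integral_const_mul, ← intervalIntegral.integral_const_mul,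
    ← intervalIntegral.integral_add]
  · congr 1 with t
    ring
  · exact (hβ.continuousOn_mul (by fun_prop)).const_mul a
  · exact (hβ.continuousOn_mul (by fun_prop)).const_mul u

/-- For all `γ, δ > 0` and all real `u`:
`γ β̂_{γ,δ+1}(u) + u β̂_{γ,δ+1}'(u) = γ e^{-u} β̂_{δ,γ+1}(-u)`, and
`δ β̂_{δ,γ+1}(u) + u β̂_{δ,γ+1}'(u) = δ e^{-u} β̂_{γ,δ+1}(-u)`. -/
theorem statement5 (γ δ : ℝ) (hγ : 0 < γ) (hδ : 0 < δ) (u : ℝ) :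
    γ * betaHat γ (δ + 1) u + u * deriv (betaHat γ (δ + 1)) u
      = γ * Real.exp (-u) * betaHat δ (γ + 1) (-u) ∧
    δ * betaHat δ (γ + 1) u + u * deriv (betaHat δ (γ + 1)) u
      = δ * Real.exp (-u) * betaHat γ (δ + 1) (-u) := by
  have key : ∀ {a b : ℝ}, 0 < a → 0 < b →
      a * betaHat a (b + 1) u + u * deriv (betaHat a (b + 1)) u
        = a * exp (-u) * betaHat b (a + 1) (-u) := by
    intro a b ha hb
    rw [mul_betaHat_add_mul_deriv ha hb, betaHat_neg, ← mul_assoc, mul_assoc a, ← exp_add,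
      neg_add_cancel, exp_zero, mul_one]
  exact ⟨key hγ hδ, key hδ hγ⟩
end

section
/- For all γ, δ > 0 and every λ > 0, lim_{x→∞} x^γ β̂_{γ,δ+1}(λx) = (Γ(γ+δ+1)/Γ(δ+1)) · λ^{−γ}. -/
/-!
The substitution `u = λ x t` gives
`x^γ β̂_{γ,δ+1}(λx) = Γ(γ+δ+1)/(Γ(γ)Γ(δ+1)) · λ^{-γ} · I(λx)` with
`I(c) = ∫_0^c e^{-u} u^{γ-1} (1 - u/c)^δ du`.
For `δ ≥ 0` the integrand of `I(c)` tends pointwise to `e^{-u} u^{γ-1}` and is dominated by it,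
so by dominated convergence the integral tends to `Γ(γ)`, which cancels against the constant.
-/

open Filter Set

open MeasureTheory Real Topology

noncomputable def truncatedGammaIntegral (a b c : ℝ) : ℝ :=
  ∫ u in (0 : ℝ)..c, exp (-u) * u ^ (a - 1) * (1 - u / c) ^ b

lemma integral_exp_neg_mul_rpow_one_sub_rpow {a b c : ℝ} (hc : 0 < c) :
    ∫ t in (0 : ℝ)..1, exp (-(c * t)) * t ^ (a - 1) * (1 - t) ^ b
      = c ^ (-a) * truncatedGammaIntegral a b c := by
  have hscale : truncatedGammaIntegral a b c
      = c * c ^ (a - 1) * ∫ t in (0 : ℝ)..1, exp (-(c * t)) * t ^ (a - 1) * (1 - t) ^ b := by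
    have := intervalIntegral.integral_comp_mul_left (E := ℝ) (a := 0) (b := 1)
      (fun u => exp (-u) * u ^ (a - 1) * (1 - u / c) ^ b) hc.ne'
    rw [mul_zero, mul_one, smul_eq_mul, ← truncatedGammaIntegral] at this
    rw [eq_inv_mul_iff_mul_eq₀ hc.ne'] at this
    rw [← this, mul_assoc, ← intervalIntegral.integral_const_mul (c ^ (a - 1))]
    congr 1
    refine intervalIntegral.integral_congr fun t ht => ?_
    rw [uIcc_of_le zero_le_one] at ht
    simp only [mul_rpow hc.le ht.1, mul_div_cancel_left₀ _ hc.ne']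
    ring
  have hpow : c ^ (-a) * (c * c ^ (a - 1)) = 1 := by
    rw [mul_comm c, ← rpow_add_one hc.ne', sub_add_cancel, rpow_neg hc.le,
      inv_mul_cancel₀ (rpow_pos_of_pos hc a).ne']
  rw [hscale, ← mul_assoc, hpow, one_mul]

lemma betaHat_eq_mul_truncatedGammaIntegral (a b : ℝ) {c : ℝ} (hc : 0 < c) :
    betaHat a (b + 1) c
      = Gamma (a + b + 1) / (Gamma a * Gamma (b + 1)) * c ^ (-a)
          * truncatedGammaIntegral a b c := by
  rw [mul_assoc, ← integral_exp_neg_mul_rpow_one_sub_rpow hc,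
    ← intervalIntegral.integral_const_mul]
  unfold betaHat betaDens
  refine intervalIntegral.integral_congr fun t _ => ?_
  simp only [add_sub_cancel_right, neg_mul, add_assoc]
  ring

lemma one_sub_div_rpow_mem_Icc {u c b : ℝ} (hu : 0 ≤ u) (huc : u ≤ c) (hb : 0 ≤ b) :
    (1 - u / c) ^ b ∈ Icc 0 1 := by
  have h0 : 0 ≤ u / c := div_nonneg hu (hu.trans huc)
  have h1 : u / c ≤ 1 := div_le_one_of_le₀ huc (hu.trans huc)
  exact ⟨rpow_nonneg (by linarith) b, rpow_le_one (by linarith) (by linarith) hb⟩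

lemma tendsto_one_sub_div_rpow (u b : ℝ) :
    Tendsto (fun c : ℝ => (1 - u / c) ^ b) atTop (𝓝 1) := by
  simpa using (((tendsto_const_nhds (x := u)).div_atTop tendsto_id).const_sub 1).rpow_const
    (Or.inl (by norm_num)) (p := b)

lemma tendsto_truncatedGammaIntegral {a b : ℝ} (ha : 0 < a) (hb : 0 ≤ b) :
    Tendsto (truncatedGammaIntegral a b) atTop (𝓝 (Gamma a)) := by
  set F : ℝ → ℝ → ℝ := fun c =>
    (Ioc 0 c).indicator fun u => exp (-u) * u ^ (a - 1) * (1 - u / c) ^ b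
  have hF : ∀ c, 0 ≤ c → truncatedGammaIntegral a b c = ∫ u in Ioi 0, F c u := by
    intro c hc
    rw [integral_indicator measurableSet_Ioc, Measure.restrict_restrict measurableSet_Ioc,
      inter_eq_left.mpr Ioc_subset_Ioi_self, truncatedGammaIntegral,
      intervalIntegral.integral_of_le hc]
  have hbound : ∀ c, ∀ u ∈ Ioi (0 : ℝ), ‖F c u‖ ≤ exp (-u) * u ^ (a - 1) := by
    intro c u hu
    have hu' : 0 < u := hu
    have hg : 0 ≤ exp (-u) * u ^ (a - 1) := by positivity
    by_cases hmem : u ∈ Ioc 0 c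
    · have ⟨h0, h1⟩ := one_sub_div_rpow_mem_Icc hu.le hmem.2 hb
      simp only [F, indicator_of_mem hmem]
      rw [norm_of_nonneg (mul_nonneg hg h0)]
      exact mul_le_of_le_one_right hg h1
    · simpa only [F, indicator_of_notMem hmem, norm_zero] using hg
  have hlim : ∀ u ∈ Ioi (0 : ℝ), Tendsto (F · u) atTop (𝓝 (exp (-u) * u ^ (a - 1))) := by
    intro u hu
    have hev : (fun c : ℝ => exp (-u) * u ^ (a - 1) * (1 - u / c) ^ b) =ᶠ[atTop] (F · u) := by
      filter_upwards [eventually_ge_atTop u] with c hc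
      simp only [F]
      rw [indicator_of_mem (show u ∈ Ioc 0 c from ⟨hu, hc⟩)]
    simpa using ((tendsto_one_sub_div_rpow u b).const_mul (exp (-u) * u ^ (a - 1))).congr' hev
  rw [Gamma_eq_integral ha]
  refine Tendsto.congr' ?_ <| tendsto_integral_filter_of_dominated_convergence (F := F) _
    (Eventually.of_forall fun c =>
      (Measurable.indicator (by fun_prop) measurableSet_Ioc).aestronglyMeasurable)
    (Eventually.of_forall fun c => (ae_restrict_mem measurableSet_Ioi).mono (hbound c))
    (GammaIntegral_convergent ha) ((ae_restrict_mem measurableSet_Ioi).mono hlim)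
  filter_upwards [eventually_ge_atTop 0] with c hc using (hF c hc).symm

/-- For all `γ, δ > 0` and every `λ > 0`,
`x^γ β̂_{γ,δ+1}(λx) → (Γ(γ+δ+1)/Γ(δ+1)) λ^{-γ}` as `x → ∞`. -/
theorem statement8 (γ δ : ℝ) (hγ : 0 < γ) (hδ : 0 < δ) (lam : ℝ) (hlam : 0 < lam) :
    Tendsto (fun x : ℝ => x ^ γ * betaHat γ (δ + 1) (lam * x)) atTop
      (nhds (Real.Gamma (γ + δ + 1) / Real.Gamma (δ + 1) * lam ^ (-γ))) := by
  have hrescale : ∀ᶠ x in atTop,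
      Gamma (γ + δ + 1) / (Gamma γ * Gamma (δ + 1)) * lam ^ (-γ)
          * truncatedGammaIntegral γ δ (lam * x) = x ^ γ * betaHat γ (δ + 1) (lam * x) := by
    filter_upwards [eventually_gt_atTop 0] with x hx
    have hpow : x ^ γ * (lam * x) ^ (-γ) = lam ^ (-γ) := by
      rw [mul_rpow hlam.le hx.le, rpow_neg hx.le, mul_left_comm,
        mul_inv_cancel₀ (rpow_pos_of_pos hx γ).ne', mul_one]
    rw [betaHat_eq_mul_truncatedGammaIntegral γ δ (mul_pos hlam hx), ← hpow]
    ring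
  have hlimit : Gamma (γ + δ + 1) / (Gamma γ * Gamma (δ + 1)) * lam ^ (-γ) * Gamma γ
      = Gamma (γ + δ + 1) / Gamma (δ + 1) * lam ^ (-γ) := by
    field_simp [(Gamma_pos_of_pos hγ).ne']
  rw [← hlimit]
  exact ((tendsto_truncatedGammaIntegral hγ hδ.le).comp
    (tendsto_id.const_mul_atTop hlam)).const_mul _ |>.congr' hrescale
end

section
/- For all γ, δ > 0, all x ≥ 0 and all λ ∈ ℝ: ∫_0^x γ m^{γ−1} β̂_{γ+1,δ}(λm) dm = x^γ β̂_{γ,δ+1}(λx). -/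
open Filter Set

/-! Scaling `m = x s` reduces the identity to `x = 1`. There, unfold `β̂_{γ+1,δ}`, swap the two
integrals, and substitute `u = s t` in the inner one: it becomes `t^{-γ} Φ(t)` with
`Φ(t) = ∫_0^t γ u^{γ-1} e^{-μu} du`, and `t^{-γ}` cancels the factor `t^γ` of `β_{γ+1,δ}(t)`.
Integrating `∫_0^1 Φ(t) (1-t)^{δ-1} dt` by parts gives `δ⁻¹ ∫_0^1 γ t^{γ-1} e^{-μt} (1-t)^δ dt`,
and `Γ(a+1) = a Γ(a)` matches the normalising constants with those of `β_{γ,δ+1}`. -/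

open MeasureTheory intervalIntegral Real

lemma intervalIntegrable_one_sub_rpow {p : ℝ} (hp : -1 < p) :
    IntervalIntegrable (fun t : ℝ => (1 - t) ^ p) volume 0 1 := by
  simpa using ((intervalIntegrable_rpow' (a := 0) (b := 1) hp).comp_sub_left 1).symm

lemma intervalIntegrable_mul_rpow_mul_exp {p : ℝ} (hp : -1 < p) (c μ a b : ℝ) :
    IntervalIntegrable (fun u => c * u ^ p * exp (-μ * u)) volume a b :=
  ((intervalIntegrable_rpow' hp).const_mul c).mul_continuousOn (by fun_prop)

lemma integral_mul_rpow_sub_one_mul_eq {γ x : ℝ} (hγ : γ ≠ 0) (hx : 0 ≤ x) (g : ℝ → ℝ) :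
    ∫ m in 0..x, γ * m ^ (γ - 1) * g m
      = x ^ γ * ∫ s in 0..1, γ * s ^ (γ - 1) * g (x * s) := by
  rcases hx.eq_or_lt with rfl | hx
  · simp [zero_rpow hγ]
  have hscale :=
    integral_comp_mul_left (fun m => γ * m ^ (γ - 1) * g m) hx.ne' (a := 0) (b := 1)
  simp only [mul_zero, mul_one, smul_eq_mul] at hscale
  calc ∫ m in 0..x, γ * m ^ (γ - 1) * g m
      = x * ∫ s in 0..1, γ * (x * s) ^ (γ - 1) * g (x * s) := by
        rw [hscale, mul_inv_cancel_left₀ hx.ne']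
    _ = x * ∫ s in 0..1, x ^ (γ - 1) * (γ * s ^ (γ - 1) * g (x * s)) := by
        congr 1
        refine integral_congr fun s hs => ?_
        rw [uIcc_of_le zero_le_one] at hs
        simp only [mul_rpow hx.le hs.1]
        ring
    _ = x ^ γ * ∫ s in 0..1, γ * s ^ (γ - 1) * g (x * s) := by
        rw [intervalIntegral.integral_const_mul, ← mul_assoc, rpow_sub_one hx.ne',
          mul_div_cancel₀ _ hx.ne']

lemma integral_primitive_mul_one_sub_rpow {f : ℝ → ℝ} {δ : ℝ} (hδ : 0 < δ)
    (hf : IntervalIntegrable f volume 0 1) (hfc : ContinuousOn f (Ioo 0 1)) :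
    ∫ t in 0..1, (∫ u in 0..t, f u) * (1 - t) ^ (δ - 1)
      = (∫ t in 0..1, f t * (1 - t) ^ δ) / δ := by
  have hΦ : ∀ t ∈ Ioo (0 : ℝ) 1, HasDerivAt (fun t => ∫ u in 0..t, f u) (f t) t := fun t ht =>
    integral_hasDerivAt_right (hf.mono_set (uIcc_subset_uIcc_left (Icc_subset_uIcc
      (Ioo_subset_Icc_self ht)))) (hfc.stronglyMeasurableAtFilter isOpen_Ioo t ht)
      (hfc.continuousAt (isOpen_Ioo.mem_nhds ht))
  have hv : ∀ t ∈ Ioo (0 : ℝ) 1,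
      HasDerivAt (fun t : ℝ => -((1 - t) ^ δ / δ)) ((1 - t) ^ (δ - 1)) t := by
    intro t ht
    have h := (((hasDerivAt_id' t).const_sub 1).rpow_const (p := δ)
      (Or.inl (by linarith [ht.2]))).div_const δ |>.neg
    refine h.congr_deriv ?_
    field_simp
  rw [integral_mul_deriv_eq_deriv_mul_of_hasDerivAt (v := fun t => -((1 - t) ^ δ / δ))
    (continuousOn_primitive_interval' hf left_mem_uIcc) (by fun_prop (disch := exact hδ.le))
    (by simpa using hΦ) (by simpa using hv) hf (intervalIntegrable_one_sub_rpow (by linarith))]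
  simp [zero_rpow hδ.ne', mul_div_assoc', intervalIntegral.integral_div]

lemma betaDens_add_one_left (a b t : ℝ) :
    betaDens (a + 1) b t =
      Gamma (a + 1 + b) / (Gamma (a + 1) * Gamma b) * t ^ a * (1 - t) ^ (b - 1) := by
  rw [betaDens, add_sub_cancel_right]

lemma betaDens_add_one_right {a b : ℝ} (ha : a ≠ 0) (hb : b ≠ 0) (t : ℝ) :
    betaDens a (b + 1) t =
      Gamma (a + 1 + b) / (Gamma (a + 1) * Gamma b) / b * (a * t ^ (a - 1)) * (1 - t) ^ b := by
  rw [betaDens, add_sub_cancel_right, Gamma_add_one ha, Gamma_add_one hb, add_right_comm,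
    add_assoc]
  field_simp

lemma integrable_rpow_mul_exp_mul_betaDens {γ δ : ℝ} (hγ : 0 < γ) (hδ : 0 < δ) (μ : ℝ) :
    Integrable (Function.uncurry fun s t =>
        γ * s ^ (γ - 1) * (exp (-(μ * s) * t) * betaDens (γ + 1) δ t))
      ((volume.restrict (Ioc 0 1)).prod (volume.restrict (Ioc 0 1))) := by
  set K := Gamma (γ + 1 + δ) / (Gamma (γ + 1) * Gamma δ)
  have hs : Integrable (fun s : ℝ => γ * s ^ (γ - 1)) (volume.restrict (Ioc 0 1)) :=
    ((intervalIntegrable_rpow' (by linarith)).const_mul γ).1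
  have ht : Integrable (fun t : ℝ => K * (1 - t) ^ (δ - 1)) (volume.restrict (Ioc 0 1)) :=
    ((intervalIntegrable_one_sub_rpow (by linarith)).const_mul K).1
  -- Split off `t ^ γ` from the density: it keeps the remaining factor bounded on the square.
  have hmeas : Measurable fun p : ℝ × ℝ => p.2 ^ γ * exp (-(μ * p.1) * p.2) := by fun_prop
  have hbound : ∀ᵐ p ∂(volume.restrict (Ioc 0 1)).prod (volume.restrict (Ioc 0 1)),
      ‖p.2 ^ γ * exp (-(μ * p.1) * p.2)‖ ≤ exp |μ| := by
    rw [Measure.prod_restrict]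
    filter_upwards [ae_restrict_mem (measurableSet_Ioc.prod measurableSet_Ioc)]
      with ⟨s, t⟩ ⟨⟨hs0, hs1⟩, ⟨ht0, ht1⟩⟩
    have hexp : -(μ * s) * t ≤ |μ| := by
      nlinarith [neg_abs_le μ, abs_nonneg μ, mul_pos hs0 ht0, mul_le_one₀ hs1 ht0.le ht1]
    rw [norm_of_nonneg (by positivity)]
    calc t ^ γ * exp (-(μ * s) * t) ≤ 1 * exp |μ| := by
          gcongr
          exact rpow_le_one ht0.le ht1 hγ.le
      _ = exp |μ| := one_mul _
  convert (hs.mul_prod ht).mul_bdd hmeas.aestronglyMeasurable hbound using 1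
  ext ⟨s, t⟩
  simp only [Function.uncurry_apply_pair, betaDens_add_one_left]
  ring

lemma integral_zero_one_mul_rpow_mul_betaHat {γ δ : ℝ} (hγ : 0 < γ) (hδ : 0 < δ) (μ : ℝ) :
    ∫ s in 0..1, γ * s ^ (γ - 1) * betaHat (γ + 1) δ (μ * s) = betaHat γ (δ + 1) μ := by
  set K := Gamma (γ + 1 + δ) / (Gamma (γ + 1) * Gamma δ) with hK
  set f : ℝ → ℝ := fun u => γ * u ^ (γ - 1) * exp (-μ * u)
  have hf : IntervalIntegrable f volume 0 1 :=
    intervalIntegrable_mul_rpow_mul_exp (by linarith) γ μ 0 1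
  have hfc : ContinuousOn f (Ioo 0 1) := fun u hu =>
    ((continuousAt_rpow_const u (γ - 1) (Or.inl hu.1.ne')).const_mul γ |>.mul
      (by fun_prop)).continuousWithinAt
  have inner : ∀ t ∈ Ioc (0 : ℝ) 1,
      ∫ s in Ioc 0 1, γ * s ^ (γ - 1) * (exp (-(μ * s) * t) * betaDens (γ + 1) δ t)
        = (∫ u in 0..t, f u) * (K * (1 - t) ^ (δ - 1)) := by
    intro t ht
    rw [integral_mul_rpow_sub_one_mul_eq hγ.ne' ht.1.le, ← integral_of_le zero_le_one,
      betaDens_add_one_left, ← hK, mul_comm (t ^ γ), ← intervalIntegral.integral_mul_const,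
      ← intervalIntegral.integral_mul_const]
    refine intervalIntegral.integral_congr fun s _ => ?_
    rw [show -μ * (t * s) = -(μ * s) * t by ring]
    ring
  calc ∫ s in 0..1, γ * s ^ (γ - 1) * betaHat (γ + 1) δ (μ * s)
      = ∫ s in Ioc 0 1, ∫ t in Ioc 0 1,
          γ * s ^ (γ - 1) * (exp (-(μ * s) * t) * betaDens (γ + 1) δ t) := by
        simp only [betaHat, integral_of_le zero_le_one, ← MeasureTheory.integral_const_mul]
    _ = ∫ t in Ioc 0 1, ∫ s in Ioc 0 1,
          γ * s ^ (γ - 1) * (exp (-(μ * s) * t) * betaDens (γ + 1) δ t) :=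
        integral_integral_swap (integrable_rpow_mul_exp_mul_betaDens hγ hδ μ)
    _ = ∫ t in 0..1, (∫ u in 0..t, f u) * (1 - t) ^ (δ - 1) * K := by
        rw [integral_of_le zero_le_one]
        refine setIntegral_congr_fun measurableSet_Ioc fun t ht => ?_
        rw [inner t ht]
        ring
    _ = K / δ * ∫ t in 0..1, f t * (1 - t) ^ δ := by
        rw [intervalIntegral.integral_mul_const, integral_primitive_mul_one_sub_rpow hδ hf hfc]
        ring
    _ = betaHat γ (δ + 1) μ := by
        rw [betaHat, ← intervalIntegral.integral_const_mul]
        refine integral_congr fun t _ => ?_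
        rw [betaDens_add_one_right hγ.ne' hδ.ne']
        ring

/-- For all `γ, δ > 0`, all `x ≥ 0` and all real `λ`:
`∫_0^x γ m^{γ-1} β̂_{γ+1,δ}(λ m) dm = x^γ β̂_{γ,δ+1}(λ x)`. -/
theorem statement9 (γ δ : ℝ) (hγ : 0 < γ) (hδ : 0 < δ) (x : ℝ) (hx : 0 ≤ x) (lam : ℝ) :
    ∫ m in (0:ℝ)..x, γ * m ^ (γ - 1) * betaHat (γ + 1) δ (lam * m)
      = x ^ γ * betaHat γ (δ + 1) (lam * x) := by
  rw [integral_mul_rpow_sub_one_mul_eq hγ.ne' hx]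
  simp_rw [← mul_assoc lam x]
  rw [integral_zero_one_mul_rpow_mul_betaHat hγ hδ]
end

section
/- Then ∫_0^∞ A(t)^{−2} dt < ∞, and the function D(x) := A(x) ∫_x^∞ A(t)^{−2} dt satisfies: D″(x) = λ² ρ(x) D(x) for all x ≥ 0, D′(0) = −1, D is positive and nonincreasing on [0,∞), and D(x) → 0 as x → ∞. -/
open MeasureTheory Filter Set Topology

/-!
Write `q = λ² ρ ≥ 0`. While `A > 0`, `A'' = q A ≥ 0` makes `A'` increase from `A'(0) = 0`,
hence `A` increase from `A(0) = 1`; so `A` has no first zero, and `A ≥ 1`, `A' ≥ 0` on `[0, ∞)`.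
Then `A'(x) ≥ ∫₀ˣ q → ∞`, so `A → ∞` and `(-1/A)' = A'/A²` gives `∫ₓ^∞ A'/A² = 1/A(x)`.
Since `A'` increases, `A'(x) ∫ₓ^∞ A⁻² ≤ ∫ₓ^∞ A'/A² = 1/A(x)`. This yields
`D' = A' ∫ₓ^∞ A⁻² - 1/A ≤ 0` and `0 < D ≤ 1/A'`, while `A⁻² ≤ A'/A²` once `A' ≥ 1` gives the
integrability of `A⁻²`. The equation `D'' = q D` is a computation from `(∫ₓ^∞ A⁻²)' = -A⁻²`.
-/

theorem Convex.monotoneOn_of_hasDerivWithinAt_nonneg' {s : Set ℝ} (hs : Convex ℝ s)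
    {f f' : ℝ → ℝ} (hf : ∀ x ∈ s, HasDerivWithinAt f (f' x) s x)
    (hf' : ∀ x ∈ interior s, 0 ≤ f' x) : MonotoneOn f s :=
  monotoneOn_of_hasDerivWithinAt_nonneg hs (fun x hx => (hf x hx).continuousWithinAt)
    (fun x hx => (hf x (interior_subset hx)).mono interior_subset) hf'

theorem Convex.antitoneOn_of_hasDerivWithinAt_nonpos' {s : Set ℝ} (hs : Convex ℝ s)
    {f f' : ℝ → ℝ} (hf : ∀ x ∈ s, HasDerivWithinAt f (f' x) s x)
    (hf' : ∀ x ∈ interior s, f' x ≤ 0) : AntitoneOn f s :=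
  antitoneOn_of_hasDerivWithinAt_nonpos hs (fun x hx => (hf x hx).continuousWithinAt)
    (fun x hx => (hf x (interior_subset hx)).mono interior_subset) hf'

theorem forall_pos_of_forall_Ico_pos {f : ℝ → ℝ} {a : ℝ} (hf : ContinuousOn f (Ici a))
    (h : ∀ b ∈ Ici a, (∀ t ∈ Ico a b, 0 < f t) → 0 < f b) : ∀ x ∈ Ici a, 0 < f x := by
  by_contra! hneg
  obtain ⟨x, hx, hfx⟩ := hneg
  have hclosed : IsClosed (Ici a ∩ f ⁻¹' Iic 0) :=
    hf.preimage_isClosed_of_isClosed isClosed_Ici isClosed_Iic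
  have hbdd : BddBelow (Ici a ∩ f ⁻¹' Iic 0) := ⟨a, fun t ht => ht.1⟩
  have hmem := hclosed.csInf_mem ⟨x, hx, hfx⟩ hbdd
  refine (h _ hmem.1 fun t ht => ?_).not_ge hmem.2
  by_contra! hft
  exact ht.2.not_ge (csInf_le hbdd ⟨ht.1, hft⟩)

theorem hasDerivWithinAt_intervalIntegral_Ici {f : ℝ → ℝ} {a x : ℝ}
    (hf : ContinuousOn f (Ici a)) (hx : x ∈ Ici a) :
    HasDerivWithinAt (fun y => ∫ t in a..y, f t) (f x) (Ici a) x := by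
  have hint : IntervalIntegrable f volume a x :=
    (hf.mono (uIcc_of_le (mem_Ici.1 hx) ▸ Icc_subset_Ici_self)).intervalIntegrable
  rcases (mem_Ici.1 hx).eq_or_lt with rfl | hax
  · obtain ⟨s, hs, hmeas⟩ := hf.stronglyMeasurableAtFilter_nhdsWithin measurableSet_Ici a
    exact intervalIntegral.integral_hasDerivWithinAt_right hint
      ⟨s, nhdsWithin_mono a Ioi_subset_Ici_self hs, hmeas⟩ ((hf a hx).mono Ioi_subset_Ici_self)
  · exact (intervalIntegral.integral_hasDerivAt_right hint
      ⟨Ici a, Ici_mem_nhds hax, hf.aestronglyMeasurable measurableSet_Ici⟩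
      (hf.continuousAt (Ici_mem_nhds hax))).hasDerivWithinAt

theorem hasDerivWithinAt_setIntegral_Ici {f : ℝ → ℝ} {a x : ℝ} (hf : ContinuousOn f (Ici a))
    (hfi : IntegrableOn f (Ici a)) (hx : x ∈ Ici a) :
    HasDerivWithinAt (fun y => ∫ t in Ici y, f t) (-f x) (Ici a) x := by
  have htail : ∀ y ∈ Ici a, ∫ t in Ici y, f t = (∫ t in Ici a, f t) - ∫ t in a..y, f t := by
    intro y hy
    rw [eq_sub_iff_add_eq, intervalIntegral.integral_of_le hy, integral_Ici_eq_integral_Ioi,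
      integral_Ici_eq_integral_Ioi, add_comm, ← setIntegral_union (Ioc_disjoint_Ioi le_rfl)
        measurableSet_Ioi (hfi.mono_set (Ioc_subset_Icc_self.trans Icc_subset_Ici_self))
        (hfi.mono_set (Ioi_subset_Ici hy)), Ioc_union_Ioi_eq_Ioi hy]
  have := (hasDerivWithinAt_intervalIntegral_Ici hf hx).const_sub (∫ t in Ici a, f t)
  exact this.congr htail (htail x hx)

theorem integrableOn_Ioi_of_intervalIntegral_le {f : ℝ → ℝ} {a M : ℝ}
    (hf : ∀ x, IntegrableOn f (Ioc a x)) (hf0 : ∀ x ∈ Ici a, 0 ≤ f x)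
    (hM : ∀ x ∈ Ici a, ∫ t in a..x, f t ≤ M) : IntegrableOn f (Ioi a) := by
  refine integrableOn_Ioi_of_intervalIntegral_norm_bounded M a hf tendsto_id
    (eventually_atTop.2 ⟨a, fun x hx => ?_⟩)
  rw [intervalIntegral.integral_congr fun t ht =>
    Real.norm_of_nonneg (hf0 t (uIcc_of_le hx ▸ ht).1)]
  exact hM x hx

structure IsKreinASolution (q A A' : ℝ → ℝ) : Prop where
  hasDerivWithinAt : ∀ x ∈ Ici (0:ℝ), HasDerivWithinAt A (A' x) (Ici 0) x
  hasDerivWithinAt_deriv : ∀ x ∈ Ici (0:ℝ), HasDerivWithinAt A' (q x * A x) (Ici 0) x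
  map_zero : A 0 = 1
  deriv_zero : A' 0 = 0

noncomputable def kreinD (A : ℝ → ℝ) (x : ℝ) : ℝ := A x * ∫ t in Ici x, (A t ^ 2)⁻¹

namespace IsKreinASolution

variable {q A A' : ℝ → ℝ}

theorem continuousOn (h : IsKreinASolution q A A') : ContinuousOn A (Ici 0) :=
  fun x hx => (h.hasDerivWithinAt x hx).continuousWithinAt

theorem continuousOn_deriv (h : IsKreinASolution q A A') : ContinuousOn A' (Ici 0) :=
  fun x hx => (h.hasDerivWithinAt_deriv x hx).continuousWithinAt

theorem hasDerivAt (h : IsKreinASolution q A A') {x : ℝ} (hx : 0 < x) :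
    HasDerivAt A (A' x) x :=
  (h.hasDerivWithinAt x hx.le).hasDerivAt (Ici_mem_nhds hx)

theorem hasDerivAt_deriv (h : IsKreinASolution q A A') {x : ℝ} (hx : 0 < x) :
    HasDerivAt A' (q x * A x) x :=
  (h.hasDerivWithinAt_deriv x hx.le).hasDerivAt (Ici_mem_nhds hx)

theorem monotoneOn_deriv_of_pos {s : Set ℝ} (h : IsKreinASolution q A A')
    (hq : ∀ x ∈ Ici (0:ℝ), 0 ≤ q x) (hs : Convex ℝ s) (hs0 : IsLeast s 0)
    (hA : ∀ x ∈ interior s, 0 < A x) :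
    MonotoneOn A' s :=
  hs.monotoneOn_of_hasDerivWithinAt_nonneg'
    (fun x hx => (h.hasDerivWithinAt_deriv x (hs0.2 hx)).mono hs0.2)
    fun x hx => mul_nonneg (hq x (hs0.2 (interior_subset hx))) (hA x hx).le

theorem monotoneOn_of_pos {s : Set ℝ} (h : IsKreinASolution q A A')
    (hq : ∀ x ∈ Ici (0:ℝ), 0 ≤ q x) (hs : Convex ℝ s) (hs0 : IsLeast s 0)
    (hA : ∀ x ∈ interior s, 0 < A x) :
    MonotoneOn A s := by
  refine hs.monotoneOn_of_hasDerivWithinAt_nonneg'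
    (fun x hx => (h.hasDerivWithinAt x (hs0.2 hx)).mono hs0.2) fun x hx => ?_
  have := h.monotoneOn_deriv_of_pos hq hs hs0 hA hs0.1 (interior_subset hx)
    (hs0.2 (interior_subset hx))
  rwa [h.deriv_zero] at this

theorem pos (h : IsKreinASolution q A A') (hq : ∀ x ∈ Ici (0:ℝ), 0 ≤ q x) :
    ∀ x ∈ Ici (0:ℝ), 0 < A x := by
  refine forall_pos_of_forall_Ico_pos h.continuousOn fun b hb hA => ?_
  have hmono := h.monotoneOn_of_pos hq (convex_Icc 0 b) (isLeast_Icc hb) (by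
    rw [interior_Icc]; exact fun x hx => hA x ⟨hx.1.le, hx.2⟩)
  have := hmono (left_mem_Icc.2 hb) (right_mem_Icc.2 hb) hb
  rw [h.map_zero] at this
  linarith

theorem monotoneOn_deriv (h : IsKreinASolution q A A') (hq : ∀ x ∈ Ici (0:ℝ), 0 ≤ q x) :
    MonotoneOn A' (Ici 0) :=
  h.monotoneOn_deriv_of_pos hq (convex_Ici 0) isLeast_Ici
    fun x hx => h.pos hq x (interior_subset hx)

theorem deriv_nonneg (h : IsKreinASolution q A A') (hq : ∀ x ∈ Ici (0:ℝ), 0 ≤ q x) {x : ℝ}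
    (hx : x ∈ Ici 0) : 0 ≤ A' x :=
  h.deriv_zero ▸ h.monotoneOn_deriv hq self_mem_Ici hx hx

theorem one_le (h : IsKreinASolution q A A') (hq : ∀ x ∈ Ici (0:ℝ), 0 ≤ q x) {x : ℝ}
    (hx : x ∈ Ici 0) : 1 ≤ A x :=
  h.map_zero ▸ h.monotoneOn_of_pos hq (convex_Ici 0) isLeast_Ici
    (fun y hy => h.pos hq y (interior_subset hy)) self_mem_Ici hx hx

theorem intervalIntegral_le_deriv (h : IsKreinASolution q A A') (hqc : ContinuousOn q (Ici 0))
    (hq : ∀ x ∈ Ici (0:ℝ), 0 ≤ q x) {x : ℝ} (hx : x ∈ Ici 0) : ∫ t in 0..x, q t ≤ A' x := by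
  have := intervalIntegral.integral_le_sub_of_hasDeriv_right_of_le hx
    (h.continuousOn_deriv.mono Icc_subset_Ici_self)
    (fun t ht => (h.hasDerivAt_deriv ht.1).hasDerivWithinAt)
    ((hqc.mono Icc_subset_Ici_self).integrableOn_Icc)
    (fun t ht => le_mul_of_one_le_right (hq t ht.1.le) (h.one_le hq ht.1.le))
  rwa [h.deriv_zero, sub_zero] at this

theorem tendsto_deriv_atTop (h : IsKreinASolution q A A') (hqc : ContinuousOn q (Ici 0))
    (hq : ∀ x ∈ Ici (0:ℝ), 0 ≤ q x) (hqtop : ∫⁻ t in Ici (0:ℝ), ENNReal.ofReal (q t) = ⊤) :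
    Tendsto A' atTop atTop := by
  refine tendsto_atTop_atTop.2 fun M => ?_
  obtain ⟨x₀, hx₀, hM⟩ : ∃ x₀ ∈ Ici (0:ℝ), M ≤ A' x₀ := by
    by_contra! hbdd
    have hint : IntegrableOn q (Ioi 0) := integrableOn_Ioi_of_intervalIntegral_le
      (fun _ => (hqc.mono Icc_subset_Ici_self).integrableOn_Icc.mono_set Ioc_subset_Icc_self) hq
      fun x hx => (h.intervalIntegral_le_deriv hqc hq hx).trans (hbdd x hx).le
    exact ((integrableOn_Ici_iff_integrableOn_Ioi (f := q) (b := 0)).2 hint).lintegral_lt_top.ne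
      hqtop
  exact ⟨x₀, fun x hx => hM.trans (h.monotoneOn_deriv hq hx₀ (hx₀.trans hx) hx)⟩

theorem tendsto_atTop (h : IsKreinASolution q A A') (hA' : Tendsto A' atTop atTop) :
    Tendsto A atTop atTop := by
  obtain ⟨x₀, hx₀⟩ :=
    ((eventually_gt_atTop 0).and (hA'.eventually_ge_atTop 1)).exists_forall_of_atTop
  have hx₀pos : 0 < x₀ := (hx₀ x₀ le_rfl).1
  have hlin : ∀ x ∈ Ici x₀, x + (A x₀ - x₀) ≤ A x := by
    intro x hx
    have := intervalIntegral.integral_le_sub_of_hasDeriv_right_of_le hx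
      (h.continuousOn.mono fun t ht => hx₀pos.le.trans ht.1)
      (fun t ht => (h.hasDerivAt (hx₀pos.trans ht.1)).hasDerivWithinAt)
      continuousOn_const.integrableOn_Icc (fun t ht => (hx₀ t ht.1.le).2)
    simp only [intervalIntegral.integral_const, smul_eq_mul, mul_one] at this
    linarith
  exact tendsto_atTop_mono' _ (eventually_atTop.2 ⟨x₀, hlin⟩)
    (tendsto_atTop_add_const_right _ _ tendsto_id)

theorem hasDerivAt_neg_inv (h : IsKreinASolution q A A') (hq : ∀ x ∈ Ici (0:ℝ), 0 ≤ q x)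
    {x : ℝ} (hx : 0 < x) : HasDerivAt (fun t => -(A t)⁻¹) (A' x / A x ^ 2) x := by
  have := ((h.hasDerivAt hx).inv (h.pos hq x hx.le).ne').neg
  rwa [neg_div, neg_neg] at this

theorem continuousOn_neg_inv (h : IsKreinASolution q A A') (hq : ∀ x ∈ Ici (0:ℝ), 0 ≤ q x) :
    ContinuousOn (fun t => -(A t)⁻¹) (Ici 0) :=
  (h.continuousOn.inv₀ fun t ht => (h.pos hq t ht).ne').neg

theorem tendsto_neg_inv_atTop (h : IsKreinASolution q A A') (hA' : Tendsto A' atTop atTop) :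
    Tendsto (fun t => -(A t)⁻¹) atTop (𝓝 0) := by
  simpa using (h.tendsto_atTop hA').inv_tendsto_atTop.neg

theorem continuousOn_inv_sq (h : IsKreinASolution q A A') (hq : ∀ x ∈ Ici (0:ℝ), 0 ≤ q x) :
    ContinuousOn (fun t => (A t ^ 2)⁻¹) (Ici 0) :=
  (h.continuousOn.pow 2).inv₀ fun t ht => pow_ne_zero 2 (h.pos hq t ht).ne'

theorem integrableOn_Ioi_deriv_div_sq (h : IsKreinASolution q A A')
    (hq : ∀ x ∈ Ici (0:ℝ), 0 ≤ q x) (hA' : Tendsto A' atTop atTop) {x : ℝ} (hx : x ∈ Ici 0) :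
    IntegrableOn (fun t => A' t / A t ^ 2) (Ioi x) :=
  integrableOn_Ioi_deriv_of_nonneg
    ((h.continuousOn_neg_inv hq x hx).mono (Ici_subset_Ici.2 hx))
    (fun _ ht => h.hasDerivAt_neg_inv hq (hx.trans_lt ht))
    (fun _ ht => div_nonneg (h.deriv_nonneg hq (Ioi_subset_Ici hx ht)) (sq_nonneg _))
    (h.tendsto_neg_inv_atTop hA')

theorem integral_Ioi_deriv_div_sq (h : IsKreinASolution q A A')
    (hq : ∀ x ∈ Ici (0:ℝ), 0 ≤ q x) (hA' : Tendsto A' atTop atTop) {x : ℝ} (hx : x ∈ Ici 0) :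
    ∫ t in Ioi x, A' t / A t ^ 2 = (A x)⁻¹ := by
  rw [integral_Ioi_of_hasDerivAt_of_tendsto ((h.continuousOn_neg_inv hq x hx).mono
    (Ici_subset_Ici.2 hx)) (fun _ ht => h.hasDerivAt_neg_inv hq (hx.trans_lt ht))
    (h.integrableOn_Ioi_deriv_div_sq hq hA' hx) (h.tendsto_neg_inv_atTop hA'), zero_sub,
    neg_neg]

theorem integrableOn_inv_sq (h : IsKreinASolution q A A') (hq : ∀ x ∈ Ici (0:ℝ), 0 ≤ q x)
    (hA' : Tendsto A' atTop atTop) : IntegrableOn (fun t => (A t ^ 2)⁻¹) (Ici 0) := by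
  obtain ⟨x₀, hx₀⟩ :=
    ((eventually_ge_atTop 0).and (hA'.eventually_ge_atTop 1)).exists_forall_of_atTop
  have hx₀0 : x₀ ∈ Ici 0 := (hx₀ x₀ le_rfl).1
  rw [← Icc_union_Ioi_eq_Ici hx₀0]
  refine ((h.continuousOn_inv_sq hq).mono Icc_subset_Ici_self).integrableOn_Icc.union ?_
  refine (h.integrableOn_Ioi_deriv_div_sq hq hA' hx₀0).mono'
    (((h.continuousOn_inv_sq hq).mono (Ioi_subset_Ici hx₀0)).aestronglyMeasurable
      measurableSet_Ioi) ((ae_restrict_iff' measurableSet_Ioi).2 (ae_of_all _ fun t ht => ?_))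
  rw [Real.norm_of_nonneg (by positivity), inv_eq_one_div]
  exact div_le_div_of_nonneg_right (hx₀ t ht.le).2 (sq_nonneg _)

theorem deriv_mul_integral_inv_sq_le (h : IsKreinASolution q A A')
    (hq : ∀ x ∈ Ici (0:ℝ), 0 ≤ q x) (hA' : Tendsto A' atTop atTop) {x : ℝ} (hx : x ∈ Ici 0) :
    A' x * ∫ t in Ici x, (A t ^ 2)⁻¹ ≤ (A x)⁻¹ :=
  calc A' x * ∫ t in Ici x, (A t ^ 2)⁻¹ = ∫ t in Ioi x, A' x * (A t ^ 2)⁻¹ := by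
        rw [integral_Ici_eq_integral_Ioi, integral_const_mul]
    _ ≤ ∫ t in Ioi x, A' t / A t ^ 2 :=
        setIntegral_mono_on
          (((h.integrableOn_inv_sq hq hA').mono_set (Ioi_subset_Ici hx)).const_mul _)
          (h.integrableOn_Ioi_deriv_div_sq hq hA' hx) measurableSet_Ioi fun t ht =>
            div_eq_mul_inv (A' t) _ ▸ mul_le_mul_of_nonneg_right
              (h.monotoneOn_deriv hq hx (Ioi_subset_Ici hx ht) ht.le)
              (inv_nonneg.2 (sq_nonneg _))
    _ = (A x)⁻¹ := h.integral_Ioi_deriv_div_sq hq hA' hx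

theorem hasDerivWithinAt_kreinD (h : IsKreinASolution q A A') (hq : ∀ x ∈ Ici (0:ℝ), 0 ≤ q x)
    (hA' : Tendsto A' atTop atTop) {x : ℝ} (hx : x ∈ Ici 0) :
    HasDerivWithinAt (kreinD A) (A' x * (∫ t in Ici x, (A t ^ 2)⁻¹) - (A x)⁻¹) (Ici 0) x := by
  refine ((h.hasDerivWithinAt x hx).mul (hasDerivWithinAt_setIntegral_Ici
    (h.continuousOn_inv_sq hq) (h.integrableOn_inv_sq hq hA') hx)).congr_deriv ?_
  field_simp [(h.pos hq x hx).ne']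
  ring

theorem hasDerivWithinAt_deriv_kreinD (h : IsKreinASolution q A A')
    (hq : ∀ x ∈ Ici (0:ℝ), 0 ≤ q x) (hA' : Tendsto A' atTop atTop) {x : ℝ} (hx : x ∈ Ici 0) :
    HasDerivWithinAt (fun y => A' y * (∫ t in Ici y, (A t ^ 2)⁻¹) - (A y)⁻¹)
      (q x * kreinD A x) (Ici 0) x := by
  refine (((h.hasDerivWithinAt_deriv x hx).mul (hasDerivWithinAt_setIntegral_Ici
    (h.continuousOn_inv_sq hq) (h.integrableOn_inv_sq hq hA') hx)).sub
    ((h.hasDerivWithinAt x hx).inv (h.pos hq x hx).ne')).congr_deriv ?_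
  rw [kreinD]
  field_simp [(h.pos hq x hx).ne']
  ring

theorem kreinD_pos (h : IsKreinASolution q A A') (hq : ∀ x ∈ Ici (0:ℝ), 0 ≤ q x)
    (hA' : Tendsto A' atTop atTop) {x : ℝ} (hx : x ∈ Ici 0) : 0 < kreinD A x := by
  refine mul_pos (h.pos hq x hx) ?_
  rw [setIntegral_pos_iff_support_of_nonneg_ae (ae_of_all _ fun t => by positivity)
    ((h.integrableOn_inv_sq hq hA').mono_set (Ici_subset_Ici.2 hx))]
  have hsupp : Ici x ⊆ Function.support (fun t => (A t ^ 2)⁻¹) ∩ Ici x := fun t ht =>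
    ⟨(inv_pos.2 (pow_pos (h.pos hq t (Ici_subset_Ici.2 hx ht)) 2)).ne', ht⟩
  exact (Real.volume_Ici ▸ ENNReal.zero_lt_top).trans_le (measure_mono hsupp)

theorem antitoneOn_kreinD (h : IsKreinASolution q A A') (hq : ∀ x ∈ Ici (0:ℝ), 0 ≤ q x)
    (hA' : Tendsto A' atTop atTop) : AntitoneOn (kreinD A) (Ici 0) :=
  (convex_Ici 0).antitoneOn_of_hasDerivWithinAt_nonpos'
    (fun _ hx => h.hasDerivWithinAt_kreinD hq hA' hx)
    fun _ hx => sub_nonpos.2 (h.deriv_mul_integral_inv_sq_le hq hA' (interior_subset hx))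

theorem kreinD_le_inv_deriv (h : IsKreinASolution q A A') (hq : ∀ x ∈ Ici (0:ℝ), 0 ≤ q x)
    (hA' : Tendsto A' atTop atTop) {x : ℝ} (hx : x ∈ Ici 0) (hA'x : 0 < A' x) :
    kreinD A x ≤ (A' x)⁻¹ := by
  have hle := mul_le_mul_of_nonneg_left (h.deriv_mul_integral_inv_sq_le hq hA' hx)
    (h.pos hq x hx).le
  rw [mul_inv_cancel₀ (h.pos hq x hx).ne'] at hle
  rw [kreinD, ← one_div, le_div_iff₀ hA'x]
  linarith

theorem tendsto_kreinD_atTop (h : IsKreinASolution q A A') (hq : ∀ x ∈ Ici (0:ℝ), 0 ≤ q x)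
    (hA' : Tendsto A' atTop atTop) : Tendsto (kreinD A) atTop (𝓝 0) :=
  tendsto_of_tendsto_of_tendsto_of_le_of_le' tendsto_const_nhds hA'.inv_tendsto_atTop
    ((eventually_ge_atTop 0).mono fun _ hx => (h.kreinD_pos hq hA' hx).le)
    (((eventually_ge_atTop 0).and (hA'.eventually_gt_atTop 0)).mono fun _ hx =>
      h.kreinD_le_inv_deriv hq hA' hx.1 hx.2)

end IsKreinASolution

/-- Let `λ > 0` and `ρ : [0,∞) → (0,∞)` be continuous with `∫_0^∞ ρ = ∞`, and let `A` solve
`A'' = λ² ρ A` on `[0,∞)` with `A(0) = 1`, `A'(0) = 0` (the A-solution of Krein's string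
equation for the string `m(x) = ∫_0^x ρ`).  Then `∫_0^∞ A(t)⁻² dt < ∞`, and
`D(x) := A(x) ∫_x^∞ A(t)⁻² dt` satisfies `D'' = λ² ρ D` on `[0,∞)`, `D'(0) = -1`,
`D` is positive and nonincreasing on `[0,∞)`, and `D(x) → 0` as `x → ∞`. -/
theorem statement10 (lam : ℝ) (hlam : 0 < lam) (ρ A A' : ℝ → ℝ)
    (hρcont : ContinuousOn ρ (Set.Ici 0))
    (hρpos : ∀ x ∈ Set.Ici (0:ℝ), 0 < ρ x)
    (hρdiv : ∫⁻ t in Set.Ici (0:ℝ), ENNReal.ofReal (ρ t) = ⊤)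
    (hA : ∀ x ∈ Set.Ici (0:ℝ), HasDerivWithinAt A (A' x) (Set.Ici 0) x)
    (hA' : ∀ x ∈ Set.Ici (0:ℝ),
      HasDerivWithinAt A' (lam ^ 2 * ρ x * A x) (Set.Ici 0) x)
    (hA0 : A 0 = 1) (hA'0 : A' 0 = 0)
    (D : ℝ → ℝ) (hD : D = fun x => A x * ∫ t in Set.Ici x, ((A t) ^ 2)⁻¹) :
    IntegrableOn (fun t => ((A t) ^ 2)⁻¹) (Set.Ici 0) volume ∧
    ∃ D' : ℝ → ℝ,
      (∀ x ∈ Set.Ici (0:ℝ), HasDerivWithinAt D (D' x) (Set.Ici 0) x) ∧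
      (∀ x ∈ Set.Ici (0:ℝ),
        HasDerivWithinAt D' (lam ^ 2 * ρ x * D x) (Set.Ici 0) x) ∧
      D' 0 = -1 ∧
      (∀ x ∈ Set.Ici (0:ℝ), 0 < D x) ∧
      AntitoneOn D (Set.Ici 0) ∧
      Tendsto D atTop (nhds 0) := by
  obtain rfl : D = kreinD A := hD
  have h : IsKreinASolution (fun x => lam ^ 2 * ρ x) A A' := ⟨hA, hA', hA0, hA'0⟩
  have hq : ∀ x ∈ Ici (0:ℝ), 0 ≤ lam ^ 2 * ρ x := fun x hx =>
    mul_nonneg (sq_nonneg lam) (hρpos x hx).le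
  have hqtop : ∫⁻ t in Ici (0:ℝ), ENNReal.ofReal (lam ^ 2 * ρ t) = ⊤ := by
    simp_rw [ENNReal.ofReal_mul (sq_nonneg lam)]
    rw [lintegral_const_mul' _ _ ENNReal.ofReal_ne_top, hρdiv]
    exact ENNReal.mul_top (ENNReal.ofReal_pos.2 (by positivity)).ne'
  have hA'top := h.tendsto_deriv_atTop (continuousOn_const.mul hρcont) hq hqtop
  refine ⟨h.integrableOn_inv_sq hq hA'top,
    fun x => A' x * (∫ t in Ici x, (A t ^ 2)⁻¹) - (A x)⁻¹,
    fun x hx => h.hasDerivWithinAt_kreinD hq hA'top hx,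
    fun x hx => h.hasDerivWithinAt_deriv_kreinD hq hA'top hx, by simp [hA0, hA'0],
    fun x hx => h.kreinD_pos hq hA'top hx, h.antitoneOn_kreinD hq hA'top,
    h.tendsto_kreinD_atTop hq hA'top⟩
end

section
/- If D₁, D₂ : [0,∞) → ℝ are twice differentiable and satisfy Dᵢ″(x) = λ² ρ(x) Dᵢ(x) for all x ≥ 0, Dᵢ′(0) = −1, and lim_{x→∞} Dᵢ(x) = 0 (for i = 1, 2), then D₁ = D₂. -/
/-!
The difference `U = D₁ - D₂` solves `U'' = q U` with `q = λ² ρ ≥ 0`, `U'(0) = 0` and `U → 0`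
at infinity. Then `(U U')' = U'² + q U² ≥ 0`, so `U U'` grows from its value `0` at the origin,
hence `(U²)' = 2 U U' ≥ 0`. A nondecreasing nonnegative function `U²` tending to `0` vanishes.
-/

open Filter Set Topology

lemma monotoneOn_Ici_of_hasDerivWithinAt_nonneg {f f' : ℝ → ℝ} {a : ℝ}
    (hf : ∀ x ∈ Ici a, HasDerivWithinAt f (f' x) (Ici a) x) (hf' : ∀ x ∈ Ici a, 0 ≤ f' x) :
    MonotoneOn f (Ici a) := by
  refine monotoneOn_of_hasDerivWithinAt_nonneg (f' := f') (convex_Ici a)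
    (fun x hx => (hf x hx).continuousWithinAt) (fun x hx => ?_) (fun x hx => ?_)
  · rw [interior_Ici] at hx ⊢
    exact (hf x (Ioi_subset_Ici_self hx)).mono Ioi_subset_Ici_self
  · rw [interior_Ici] at hx
    exact hf' x (Ioi_subset_Ici_self hx)

lemma MonotoneOn.le_of_tendsto_atTop {f : ℝ → ℝ} {a l : ℝ} (hf : MonotoneOn f (Ici a))
    (hl : Tendsto f atTop (𝓝 l)) {x : ℝ} (hx : x ∈ Ici a) : f x ≤ l :=
  ge_of_tendsto hl <| eventually_atTop.2
    ⟨x, fun _ hy => hf hx (le_trans hx hy) hy⟩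

theorem eqOn_zero_of_hasDerivWithinAt_deriv_eq_nonneg_mul {q U U' : ℝ → ℝ} {a : ℝ}
    (hq : ∀ x ∈ Ici a, 0 ≤ q x)
    (hU : ∀ x ∈ Ici a, HasDerivWithinAt U (U' x) (Ici a) x)
    (hU' : ∀ x ∈ Ici a, HasDerivWithinAt U' (q x * U x) (Ici a) x)
    (ha : U' a = 0) (hlim : Tendsto U atTop (𝓝 0)) :
    EqOn U 0 (Ici a) := by
  have hUU' : MonotoneOn (fun x => U x * U' x) (Ici a) :=
    monotoneOn_Ici_of_hasDerivWithinAt_nonneg (fun x hx => (hU x hx).mul (hU' x hx))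
      (fun x hx => by
        nlinarith [mul_self_nonneg (U' x), mul_nonneg (hq x hx) (mul_self_nonneg (U x))])
  have hUU'_nonneg : ∀ x ∈ Ici a, 0 ≤ U x * U' x := fun x hx => by
    simpa [ha] using hUU' self_mem_Ici hx hx
  have hsq : MonotoneOn (fun x => U x * U x) (Ici a) :=
    monotoneOn_Ici_of_hasDerivWithinAt_nonneg (fun x hx => (hU x hx).mul (hU x hx))
      (fun x hx => by nlinarith [hUU'_nonneg x hx])
  intro x hx
  have hsq_le : U x * U x ≤ 0 := by
    simpa using hsq.le_of_tendsto_atTop (by simpa using hlim.mul hlim) hx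
  exact mul_self_eq_zero.1 (le_antisymm hsq_le (mul_self_nonneg _))

theorem statement11_general (lam : ℝ) (ρ : ℝ → ℝ)
    (hρpos : ∀ x ∈ Set.Ici (0:ℝ), 0 < ρ x)
    (D₁ D₁' D₂ D₂' : ℝ → ℝ)
    (hD₁ : ∀ x ∈ Set.Ici (0:ℝ), HasDerivWithinAt D₁ (D₁' x) (Set.Ici 0) x)
    (hD₁' : ∀ x ∈ Set.Ici (0:ℝ),
      HasDerivWithinAt D₁' (lam ^ 2 * ρ x * D₁ x) (Set.Ici 0) x)
    (hD₁0 : D₁' 0 = -1)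
    (hD₁lim : Tendsto D₁ atTop (nhds 0))
    (hD₂ : ∀ x ∈ Set.Ici (0:ℝ), HasDerivWithinAt D₂ (D₂' x) (Set.Ici 0) x)
    (hD₂' : ∀ x ∈ Set.Ici (0:ℝ),
      HasDerivWithinAt D₂' (lam ^ 2 * ρ x * D₂ x) (Set.Ici 0) x)
    (hD₂0 : D₂' 0 = -1)
    (hD₂lim : Tendsto D₂ atTop (nhds 0)) :
    Set.EqOn D₁ D₂ (Set.Ici 0) := by
  have hdiff : EqOn (fun x => D₁ x - D₂ x) 0 (Ici 0) :=
    eqOn_zero_of_hasDerivWithinAt_deriv_eq_nonneg_mul (q := fun x => lam ^ 2 * ρ x)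
      (fun x hx => mul_nonneg (sq_nonneg lam) (hρpos x hx).le)
      (fun x hx => (hD₁ x hx).sub (hD₂ x hx))
      (fun x hx => ((hD₁' x hx).sub (hD₂' x hx)).congr_deriv (by ring))
      (by rw [hD₁0, hD₂0, sub_self]) (by simpa using hD₁lim.sub hD₂lim)
  exact fun x hx => sub_eq_zero.1 (hdiff hx)

/-- Uniqueness of the D-solution of Krein's string equation: if `λ > 0`,
`ρ : [0,∞) → (0,∞)` is continuous with `∫_0^∞ ρ = ∞`, and `D₁, D₂` are twice
differentiable on `[0,∞)` with `Dᵢ'' = λ² ρ Dᵢ`, `Dᵢ'(0) = -1` and `Dᵢ(x) → 0`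
as `x → ∞`, then `D₁ = D₂` on `[0,∞)`. -/
theorem statement11 (lam : ℝ) (hlam : 0 < lam) (ρ : ℝ → ℝ)
    (hρcont : ContinuousOn ρ (Set.Ici 0))
    (hρpos : ∀ x ∈ Set.Ici (0:ℝ), 0 < ρ x)
    (hρdiv : ∫⁻ t in Set.Ici (0:ℝ), ENNReal.ofReal (ρ t) = ⊤)
    (D₁ D₁' D₂ D₂' : ℝ → ℝ)
    (hD₁ : ∀ x ∈ Set.Ici (0:ℝ), HasDerivWithinAt D₁ (D₁' x) (Set.Ici 0) x)
    (hD₁' : ∀ x ∈ Set.Ici (0:ℝ),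
      HasDerivWithinAt D₁' (lam ^ 2 * ρ x * D₁ x) (Set.Ici 0) x)
    (hD₁0 : D₁' 0 = -1)
    (hD₁lim : Tendsto D₁ atTop (nhds 0))
    (hD₂ : ∀ x ∈ Set.Ici (0:ℝ), HasDerivWithinAt D₂ (D₂' x) (Set.Ici 0) x)
    (hD₂' : ∀ x ∈ Set.Ici (0:ℝ),
      HasDerivWithinAt D₂' (lam ^ 2 * ρ x * D₂ x) (Set.Ici 0) x)
    (hD₂0 : D₂' 0 = -1)
    (hD₂lim : Tendsto D₂ atTop (nhds 0)) :
    Set.EqOn D₁ D₂ (Set.Ici 0) :=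
  statement11_general lam ρ hρpos D₁ D₁' D₂ D₂' hD₁ hD₁' hD₁0 hD₁lim hD₂ hD₂' hD₂0 hD₂lim
end

section
/- Let H : (0,∞) → (0,∞) be differentiable and nondecreasing, let λ ∈ ℝ, and let p, q : (0,∞) → ℝ be differentiable functions satisfying the coupled system p′(x) = e^{−λx} q(x) H′(x)/H(x) and q′(x) = e^{λx} p(x) H′(x)/H(x) for all x > 0. Define u(x) := (e^{λx/2} p(x) + e^{−λx/2} q(x))/H(x). Then the function x ↦ H(x)² u′(x) is differentiable on (0,∞) and (H² u′)′(x) = (λ²/4) H(x)² u(x) for all x > 0. (Equivalently: after the change of variable s(x) = ∫ H^{−2} dt, the function A(s(x)) := u(x) satisfies the string equation d²A/(dm ds) = λ² A for the string with dm/ds = H⁴/4.) -/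
/-!
Write `E = e^{λx/2}`, `S = E p + E⁻¹ q` and `D = E p - E⁻¹ q`. The fluctuation system turns into
the symmetric system `S' = (λ/2) D + (H'/H) S`, `D' = (λ/2) S - (H'/H) D`. Since `u = S / H`, the
first equation gives `H² u' = (λ/2) H D`, and the second gives `(H D)' = (λ/2) H S = (λ/2) H² u`.
-/

open Filter Set Real

namespace Fluctuation

variable (lam : ℝ) (p q : ℝ → ℝ)

noncomputable def twistedSum (x : ℝ) : ℝ := exp (lam * x / 2) * p x + exp (-(lam * x / 2)) * q x

noncomputable def twistedDiff (x : ℝ) : ℝ := exp (lam * x / 2) * p x - exp (-(lam * x / 2)) * q x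

theorem exp_half_mul_exp_neg (t : ℝ) : exp (t / 2) * exp (-t) = exp (-(t / 2)) := by
  rw [← exp_add]; ring_nf

theorem exp_neg_half_mul_exp (t : ℝ) : exp (-(t / 2)) * exp t = exp (t / 2) := by
  rw [← exp_add]; ring_nf

theorem hasDerivAt_exp_half_mul (x : ℝ) :
    HasDerivAt (fun y => exp (lam * y / 2)) (lam / 2 * exp (lam * x / 2)) x := by
  refine (((hasDerivAt_id' x).const_mul lam).div_const 2).exp.congr_deriv ?_
  ring

theorem hasDerivAt_exp_neg_half_mul (x : ℝ) :
    HasDerivAt (fun y => exp (-(lam * y / 2))) (-(lam / 2) * exp (-(lam * x / 2))) x := by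
  refine (((hasDerivAt_id' x).const_mul lam).div_const 2).fun_neg.exp.congr_deriv ?_
  ring

variable {lam p q} {x : ℝ}

section

variable {a : ℝ} (hp : HasDerivAt p (exp (-(lam * x)) * q x * a) x)
  (hq : HasDerivAt q (exp (lam * x) * p x * a) x)
include hp hq

theorem hasDerivAt_twistedSum :
    HasDerivAt (twistedSum lam p q)
      (lam / 2 * twistedDiff lam p q x + a * twistedSum lam p q x) x := by
  refine (((hasDerivAt_exp_half_mul lam x).fun_mul hp).fun_add
    ((hasDerivAt_exp_neg_half_mul lam x).fun_mul hq)).congr_deriv ?_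
  simp only [twistedSum, twistedDiff]
  linear_combination q x * a * exp_half_mul_exp_neg (lam * x)
    + p x * a * exp_neg_half_mul_exp (lam * x)

theorem hasDerivAt_twistedDiff :
    HasDerivAt (twistedDiff lam p q)
      (lam / 2 * twistedSum lam p q x - a * twistedDiff lam p q x) x := by
  refine (((hasDerivAt_exp_half_mul lam x).fun_mul hp).fun_sub
    ((hasDerivAt_exp_neg_half_mul lam x).fun_mul hq)).congr_deriv ?_
  simp only [twistedSum, twistedDiff]
  linear_combination q x * a * exp_half_mul_exp_neg (lam * x)
    - p x * a * exp_neg_half_mul_exp (lam * x)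

end

variable {H : ℝ → ℝ} {h : ℝ} (hH : HasDerivAt H h x) (hHx : H x ≠ 0)
  (hp : HasDerivAt p (exp (-(lam * x)) * q x * (h / H x)) x)
  (hq : HasDerivAt q (exp (lam * x) * p x * (h / H x)) x)
include hH hHx hp hq

theorem hasDerivAt_twistedSum_div :
    HasDerivAt (fun y => twistedSum lam p q y / H y) (lam / 2 * twistedDiff lam p q x / H x) x := by
  refine ((hasDerivAt_twistedSum hp hq).div hH hHx).congr_deriv ?_
  field_simp
  ring

theorem hasDerivAt_mul_twistedDiff :
    HasDerivAt (fun y => H y * twistedDiff lam p q y) (lam / 2 * (H x * twistedSum lam p q x)) x := by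
  refine (hH.mul (hasDerivAt_twistedDiff hp hq)).congr_deriv ?_
  field_simp
  ring

end Fluctuation

theorem statement13_general (lam : ℝ) (H H' p q : ℝ → ℝ)
    (hH : ∀ x ∈ Set.Ioi (0:ℝ), HasDerivAt H (H' x) x)
    (hHpos : ∀ x ∈ Set.Ioi (0:ℝ), 0 < H x)
    (hp : ∀ x ∈ Set.Ioi (0:ℝ),
      HasDerivAt p (Real.exp (-(lam * x)) * q x * H' x / H x) x)
    (hq : ∀ x ∈ Set.Ioi (0:ℝ),
      HasDerivAt q (Real.exp (lam * x) * p x * H' x / H x) x)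
    (u : ℝ → ℝ)
    (hu : u = fun x =>
      (Real.exp (lam * x / 2) * p x + Real.exp (-(lam * x / 2)) * q x) / H x) :
    ∀ x ∈ Set.Ioi (0:ℝ),
      HasDerivAt (fun y : ℝ => (H y) ^ 2 * deriv u y)
        (lam ^ 2 / 4 * (H x) ^ 2 * u x) x := by
  open Fluctuation in
  intro x hx
  have hu_twisted : u = fun y => twistedSum lam p q y / H y := hu
  have hp' (y) (hy : y ∈ Ioi (0:ℝ)) : HasDerivAt p (exp (-(lam * y)) * q y * (H' y / H y)) y := by
    simpa only [mul_div_assoc] using hp y hy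
  have hq' (y) (hy : y ∈ Ioi (0:ℝ)) : HasDerivAt q (exp (lam * y) * p y * (H' y / H y)) y := by
    simpa only [mul_div_assoc] using hq y hy
  have hHne (y) (hy : y ∈ Ioi (0:ℝ)) : H y ≠ 0 := (hHpos y hy).ne'
  have hflux : (fun y => H y ^ 2 * deriv u y) =ᶠ[nhds x]
      fun y => lam / 2 * (H y * twistedDiff lam p q y) := by
    filter_upwards [isOpen_Ioi.mem_nhds hx] with y hy
    rw [hu_twisted, (hasDerivAt_twistedSum_div (hH y hy) (hHne y hy) (hp' y hy) (hq' y hy)).deriv]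
    field_simp [hHne y hy]
  have hHD := hasDerivAt_mul_twistedDiff (hH x hx) (hHne x hx) (hp' x hx) (hq' x hx)
  refine ((hHD.const_mul (lam / 2)).congr_deriv ?_).congr_of_eventuallyEq hflux
  rw [hu_twisted]
  field_simp [hHne x hx]
  ring

/-- Let `H : (0,∞) → (0,∞)` be differentiable and nondecreasing, `λ ∈ ℝ`, and let
`p, q` be differentiable on `(0,∞)` solving the coupled fluctuation system
`p'(x) = e^{-λx} q(x) H'(x)/H(x)`, `q'(x) = e^{λx} p(x) H'(x)/H(x)`.
With `u(x) := (e^{λx/2} p(x) + e^{-λx/2} q(x))/H(x)`, the function `x ↦ H(x)² u'(x)`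
is differentiable on `(0,∞)` and `(H² u')'(x) = (λ²/4) H(x)² u(x)` for all `x > 0`
(the Krein string equation with string density `dm/ds = H⁴/4` after the change of
variable `s = ∫ H⁻²`). -/
theorem statement13 (lam : ℝ) (H H' p q : ℝ → ℝ)
    (hH : ∀ x ∈ Set.Ioi (0:ℝ), HasDerivAt H (H' x) x)
    (hHmono : MonotoneOn H (Set.Ioi 0))
    (hHpos : ∀ x ∈ Set.Ioi (0:ℝ), 0 < H x)
    (hp : ∀ x ∈ Set.Ioi (0:ℝ),
      HasDerivAt p (Real.exp (-(lam * x)) * q x * H' x / H x) x)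
    (hq : ∀ x ∈ Set.Ioi (0:ℝ),
      HasDerivAt q (Real.exp (lam * x) * p x * H' x / H x) x)
    (u : ℝ → ℝ)
    (hu : u = fun x =>
      (Real.exp (lam * x / 2) * p x + Real.exp (-(lam * x / 2)) * q x) / H x) :
    ∀ x ∈ Set.Ioi (0:ℝ),
      HasDerivAt (fun y : ℝ => (H y) ^ 2 * deriv u y)
        (lam ^ 2 / 4 * (H x) ^ 2 * u x) x :=
  statement13_general lam H H' p q hH hHpos hp hq u hu
end

section
/- Let γ > 0 and λ ∈ ℝ, and define u(x) := e^{λx/2} β̂_{γ,γ+1}(λx) + e^{−λx/2} β̂_{γ,γ+1}(−λx) for x > 0. Then the function x ↦ x^{2γ} u′(x) is differentiable on (0,∞) with (x^{2γ} u′)′(x) = (λ²/4) x^{2γ} u(x) for all x > 0, and u(x) → 2 as x → 0⁺. -/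
/-!
Since `β_{γ,γ+1}(t) + β_{γ,γ+1}(1 - t) = C (t(1-t))^(γ-1)` with `C = Γ(2γ+1)/(Γ(γ)Γ(γ+1))`, the
substitution `t ↦ 1 - t` in the second summand gives `u(x) = C F₀(λx)`, where
`F_k(s) = ∫₀¹ (1/2 - t)^k e^(s(1/2 - t)) (t(1-t))^(γ-1) dt` and `F_k' = F_(k+1)`.
Writing `(1/2 - t)² = 1/4 - t(1-t)` and integrating by parts against
`d/dt (t(1-t))^γ = 2γ (1/2 - t) (t(1-t))^(γ-1)` (the boundary terms vanish since `γ > 0`) gives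
`s F₂ + 2γ F₁ = (s/4) F₀`, which is the equation `x u'' + 2γ u' = (λ²/4) x u`.
Finally `u(0) = C B(γ, γ) = 2`.
-/

open Filter Set

open Real MeasureTheory intervalIntegral

theorem rpow_sub_one_mul_self {t γ : ℝ} (ht : 0 ≤ t) (hγ : γ ≠ 0) : t ^ (γ - 1) * t = t ^ γ := by
  rw [← rpow_add_one' ht (by simpa)]; ring_nf

section BetaIntegral

variable {a b : ℝ}

theorem ofReal_rpow_mul_one_sub_rpow {t : ℝ} (ht : t ∈ Icc (0:ℝ) 1) :
    (((t ^ (a - 1) * (1 - t) ^ (b - 1) : ℝ)) : ℂ)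
      = (t : ℂ) ^ ((a : ℂ) - 1) * (1 - (t : ℂ)) ^ ((b : ℂ) - 1) := by
  rw [Complex.ofReal_mul, Complex.ofReal_cpow ht.1, Complex.ofReal_cpow (sub_nonneg.2 ht.2)]
  push_cast
  rfl

theorem intervalIntegrable_rpow_mul_one_sub_rpow (ha : 0 < a) (hb : 0 < b) :
    IntervalIntegrable (fun t : ℝ => t ^ (a - 1) * (1 - t) ^ (b - 1)) volume 0 1 := by
  refine (Complex.betaIntegral_convergent (u := a) (v := b) (by simpa) (by simpa)).norm.congr
    fun t ht => ?_
  rw [uIoc_of_le zero_le_one] at ht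
  have ht' : t ∈ Icc (0:ℝ) 1 := Ioc_subset_Icc_self ht
  simp only [← ofReal_rpow_mul_one_sub_rpow ht', Complex.norm_real, Real.norm_eq_abs]
  exact abs_of_nonneg (mul_nonneg (rpow_nonneg ht'.1 _) (rpow_nonneg (sub_nonneg.2 ht'.2) _))

theorem integral_rpow_mul_one_sub_rpow (ha : 0 < a) (hb : 0 < b) :
    ∫ t in (0:ℝ)..1, t ^ (a - 1) * (1 - t) ^ (b - 1) = Gamma a * Gamma b / Gamma (a + b) := by
  have hbeta : Complex.betaIntegral a b
      = ((∫ t in (0:ℝ)..1, t ^ (a - 1) * (1 - t) ^ (b - 1) : ℝ) : ℂ) := by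
    rw [← intervalIntegral.integral_ofReal, Complex.betaIntegral]
    refine integral_congr fun t ht => (ofReal_rpow_mul_one_sub_rpow ?_).symm
    rwa [uIcc_of_le zero_le_one] at ht
  have h := Complex.Gamma_mul_Gamma_eq_betaIntegral (s := a) (t := b) (by simpa) (by simpa)
  rw [hbeta, ← Complex.ofReal_add] at h
  simp only [Complex.Gamma_ofReal] at h
  norm_cast at h
  rw [h, mul_div_cancel_left₀ _ (Gamma_pos_of_pos (add_pos ha hb)).ne']

end BetaIntegral

theorem hasDerivAt_integral_exp_mul {a b : ℝ} {f g : ℝ → ℝ} (hf : IntervalIntegrable f volume a b)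
    (hg : ContinuousOn g (uIcc a b)) (s₀ : ℝ) :
    HasDerivAt (fun s => ∫ t in a..b, exp (s * g t) * f t)
      (∫ t in a..b, exp (s₀ * g t) * (g t * f t)) s₀ := by
  have hexp : ∀ s, ContinuousOn (fun t => exp (s * g t)) (uIcc a b) := fun s =>
    continuous_exp.comp_continuousOn (continuousOn_const.mul hg)
  obtain ⟨M, hM⟩ := isCompact_uIcc.exists_bound_of_continuousOn hg
  have hM0 : 0 ≤ M := (norm_nonneg _).trans (hM a left_mem_uIcc)
  have hbound : ∀ t ∈ uIoc a b, ∀ s ∈ Metric.ball s₀ 1,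
      ‖exp (s * g t) * (g t * f t)‖ ≤ exp ((|s₀| + 1) * M) * M * ‖f t‖ := by
    intro t ht s hs
    have hgt : |g t| ≤ M := hM t (uIoc_subset_uIcc ht)
    have hs' : |s| ≤ |s₀| + 1 := by
      have := abs_sub_abs_le_abs_sub s s₀
      rw [Metric.mem_ball, Real.dist_eq] at hs
      linarith
    have hexp_le : exp (s * g t) ≤ exp ((|s₀| + 1) * M) := exp_le_exp.2 <|
      (le_abs_self _).trans <| (abs_mul s (g t)).trans_le <|
        mul_le_mul hs' hgt (abs_nonneg _) (by positivity)
    rw [norm_mul, norm_mul, Real.norm_eq_abs (exp _), abs_of_pos (exp_pos _), ← mul_assoc]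
    gcongr
    exact hgt
  refine (hasDerivAt_integral_of_dominated_loc_of_deriv_le (Metric.ball_mem_nhds s₀ one_pos)
    (Eventually.of_forall fun s => (hf.continuousOn_mul (hexp s)).def'.aestronglyMeasurable)
    (hf.continuousOn_mul (hexp s₀))
    ((hf.continuousOn_mul hg).continuousOn_mul (hexp s₀)).def'.aestronglyMeasurable
    (Eventually.of_forall hbound) (hf.norm.const_mul _)
    (Eventually.of_forall fun t _ s _ => ?_)).2
  exact ((hasDerivAt_mul_const (g t)).exp.mul_const (f t)).congr_deriv (mul_assoc _ _ _)

section CentredBetaLaplace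

variable {γ : ℝ}

theorem intervalIntegrable_mul_rpow_mul_one_sub_rpow (hγ : 0 < γ) {g : ℝ → ℝ} (hg : Continuous g) :
    IntervalIntegrable (fun t => g t * (t ^ (γ - 1) * (1 - t) ^ (γ - 1))) volume 0 1 :=
  (intervalIntegrable_rpow_mul_one_sub_rpow hγ hγ).continuousOn_mul hg.continuousOn

noncomputable def centredBetaLaplace (γ : ℝ) (k : ℕ) (s : ℝ) : ℝ :=
  ∫ t in (0:ℝ)..1, exp (s * (1/2 - t)) * ((1/2 - t) ^ k * (t ^ (γ - 1) * (1 - t) ^ (γ - 1)))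

theorem intervalIntegrable_centredBetaLaplace (hγ : 0 < γ) (k : ℕ) (s : ℝ) :
    IntervalIntegrable
      (fun t => exp (s * (1/2 - t)) * ((1/2 - t) ^ k * (t ^ (γ - 1) * (1 - t) ^ (γ - 1))))
      volume 0 1 :=
  (intervalIntegrable_mul_rpow_mul_one_sub_rpow hγ
    (g := fun t => exp (s * (1/2 - t)) * (1/2 - t) ^ k) (by fun_prop)).congr
    fun t _ => mul_assoc _ _ _

theorem hasDerivAt_centredBetaLaplace (hγ : 0 < γ) (k : ℕ) (s : ℝ) :
    HasDerivAt (centredBetaLaplace γ k) (centredBetaLaplace γ (k + 1) s) s :=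
  (hasDerivAt_integral_exp_mul (intervalIntegrable_mul_rpow_mul_one_sub_rpow hγ (by fun_prop))
    (g := fun t => 1/2 - t) (by fun_prop) s).congr_deriv
    (by simp only [centredBetaLaplace, pow_succ', mul_assoc])

theorem hasDerivAt_rpow_mul_one_sub_rpow (hγ : γ ≠ 0) {t : ℝ} (ht : t ∈ Ioo (0:ℝ) 1) :
    HasDerivAt (fun t : ℝ => t ^ γ * (1 - t) ^ γ)
      (2 * γ * ((1/2 - t) * (t ^ (γ - 1) * (1 - t) ^ (γ - 1)))) t := by
  have h1t : 0 < 1 - t := sub_pos.2 ht.2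
  have hl := hasDerivAt_rpow_const (p := γ) (Or.inl ht.1.ne')
  have hr := (hasDerivAt_rpow_const (p := γ) (Or.inl h1t.ne')).comp t
    ((hasDerivAt_id t).const_sub 1)
  refine (hl.mul hr).congr_deriv ?_
  simp only [Function.comp_apply, ← rpow_sub_one_mul_self ht.1.le hγ,
    ← rpow_sub_one_mul_self h1t.le hγ]
  ring

theorem mul_integral_exp_mul_rpow_mul_one_sub_rpow (hγ : 0 < γ) (s : ℝ) :
    s * ∫ t in (0:ℝ)..1, exp (s * (1/2 - t)) * (t ^ γ * (1 - t) ^ γ)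
      = 2 * γ * centredBetaLaplace γ 1 s := by
  have hW : Continuous fun t : ℝ => t ^ γ * (1 - t) ^ γ := by
    fun_prop (disch := exact hγ.le)
  have hint : IntervalIntegrable (fun t => exp (s * (1/2 - t)) * (t ^ γ * (1 - t) ^ γ))
      volume 0 1 :=
    Continuous.intervalIntegrable (by fun_prop) 0 1
  have hftc := integral_eq_sub_of_hasDerivAt_of_le zero_le_one
    (f := fun t => exp (s * (1/2 - t)) * (t ^ γ * (1 - t) ^ γ)) (by fun_prop)
    (fun t ht => ((((hasDerivAt_id t).const_sub (1/2)).const_mul s).exp.mul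
      (hasDerivAt_rpow_mul_one_sub_rpow hγ.ne' ht)).congr_deriv ?_)
    (((intervalIntegrable_centredBetaLaplace hγ 1 s).const_mul (2 * γ)).sub (hint.const_mul s))
  · rw [integral_sub (by exact (intervalIntegrable_centredBetaLaplace hγ 1 s).const_mul _)
      (hint.const_mul _), intervalIntegral.integral_const_mul,
      intervalIntegral.integral_const_mul] at hftc
    simp only [zero_rpow hγ.ne', sub_self, sub_zero, mul_zero, zero_mul] at hftc
    rw [centredBetaLaplace]
    linarith
  · simp only [id, pow_one]
    ring

theorem centredBetaLaplace_ode (hγ : 0 < γ) (s : ℝ) :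
    s * centredBetaLaplace γ 2 s + 2 * γ * centredBetaLaplace γ 1 s
      = s / 4 * centredBetaLaplace γ 0 s := by
  have hint : IntervalIntegrable (fun t => exp (s * (1/2 - t)) * (t ^ γ * (1 - t) ^ γ))
      volume 0 1 :=
    Continuous.intervalIntegrable (by fun_prop (disch := exact hγ.le)) 0 1
  have hsplit : centredBetaLaplace γ 2 s = centredBetaLaplace γ 0 s / 4
      - ∫ t in (0:ℝ)..1, exp (s * (1/2 - t)) * (t ^ γ * (1 - t) ^ γ) := by
    rw [div_eq_inv_mul, centredBetaLaplace, centredBetaLaplace,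
      ← intervalIntegral.integral_const_mul,
      ← integral_sub ((intervalIntegrable_centredBetaLaplace hγ 0 s).const_mul _) hint]
    refine integral_congr fun t ht => ?_
    rw [uIcc_of_le zero_le_one] at ht
    simp only [← rpow_sub_one_mul_self ht.1 hγ.ne',
      ← rpow_sub_one_mul_self (sub_nonneg.2 ht.2) hγ.ne']
    ring
  linear_combination s * hsplit - mul_integral_exp_mul_rpow_mul_one_sub_rpow hγ s

theorem centredBetaLaplace_zero_zero (hγ : 0 < γ) :
    centredBetaLaplace γ 0 0 = Gamma γ * Gamma γ / Gamma (γ + γ) := by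
  simp [centredBetaLaplace, integral_rpow_mul_one_sub_rpow hγ hγ]

theorem betaDens_add_one {t : ℝ} (hγ : γ ≠ 0) (ht : t ∈ Icc (0:ℝ) 1) :
    betaDens γ (γ + 1) t = Gamma (γ + (γ + 1)) / (Gamma γ * Gamma (γ + 1))
      * ((1 - t) * (t ^ (γ - 1) * (1 - t) ^ (γ - 1))) := by
  rw [betaDens, add_sub_cancel_right, ← rpow_sub_one_mul_self (sub_nonneg.2 ht.2) hγ]
  ring

theorem exp_mul_betaHat_add_exp_mul_betaHat_neg (hγ : 0 < γ) (s : ℝ) :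
    exp (s / 2) * betaHat γ (γ + 1) s + exp (-(s / 2)) * betaHat γ (γ + 1) (-s)
      = Gamma (γ + (γ + 1)) / (Gamma γ * Gamma (γ + 1)) * centredBetaLaplace γ 0 s := by
  set C := Gamma (γ + (γ + 1)) / (Gamma γ * Gamma (γ + 1))
  have hβ : ∀ c r, exp c * betaHat γ (γ + 1) r
      = ∫ t in (0:ℝ)..1,
          exp (c - r * t) * (C * ((1 - t) * (t ^ (γ - 1) * (1 - t) ^ (γ - 1)))) := by
    intro c r
    rw [betaHat, ← intervalIntegral.integral_const_mul]
    refine integral_congr fun t ht => ?_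
    rw [uIcc_of_le zero_le_one] at ht
    rw [betaDens_add_one hγ.ne' ht, ← mul_assoc, ← exp_add, neg_mul, ← sub_eq_add_neg]
  have hflip : ∫ t in (0:ℝ)..1, exp (-(s / 2) - -s * t)
        * (C * ((1 - t) * (t ^ (γ - 1) * (1 - t) ^ (γ - 1))))
      = ∫ t in (0:ℝ)..1, exp (s * (1/2 - t)) * (C * (t * (t ^ (γ - 1) * (1 - t) ^ (γ - 1)))) := by
    have hsub := integral_comp_sub_left (a := 0) (b := 1)
      (fun t => exp (-(s / 2) - -s * t) * (C * ((1 - t) * (t ^ (γ - 1) * (1 - t) ^ (γ - 1))))) 1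
    rw [sub_self, sub_zero] at hsub
    rw [← hsub]
    refine integral_congr fun t _ => ?_
    simp only [sub_sub_cancel]
    ring_nf
  rw [hβ, hβ, hflip, ← intervalIntegral.integral_add, centredBetaLaplace,
    ← intervalIntegral.integral_const_mul]
  · refine integral_congr fun t _ => ?_
    ring_nf
  · exact (intervalIntegrable_mul_rpow_mul_one_sub_rpow hγ
      (g := fun t => exp (s / 2 - s * t) * (C * (1 - t))) (by fun_prop)).congr fun t _ => by ring
  · exact (intervalIntegrable_mul_rpow_mul_one_sub_rpow hγ
      (g := fun t => exp (s * (1/2 - t)) * (C * t)) (by fun_prop)).congr fun t _ => by ring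

end CentredBetaLaplace

/-- For `γ > 0`, `λ ∈ ℝ` and `u(x) = e^{λx/2} β̂_{γ,γ+1}(λx) + e^{-λx/2} β̂_{γ,γ+1}(-λx)`,
the function `x ↦ x^{2γ} u'(x)` is differentiable on `(0,∞)` with
`(x^{2γ} u')'(x) = (λ²/4) x^{2γ} u(x)`, and `u(x) → 2` as `x → 0⁺`. -/
theorem statement14 (γ : ℝ) (hγ : 0 < γ) (lam : ℝ)
    (u : ℝ → ℝ)
    (hu : u = fun x => Real.exp (lam * x / 2) * betaHat γ (γ + 1) (lam * x)
      + Real.exp (-(lam * x / 2)) * betaHat γ (γ + 1) (-(lam * x))) :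
    (∀ x ∈ Set.Ioi (0:ℝ),
      HasDerivAt (fun y : ℝ => y ^ (2 * γ) * deriv u y)
        (lam ^ 2 / 4 * x ^ (2 * γ) * u x) x) ∧
    Tendsto u (nhdsWithin 0 (Set.Ioi 0)) (nhds 2) := by
  set C := Gamma (γ + (γ + 1)) / (Gamma γ * Gamma (γ + 1))
  have hu_eq : u = fun x => C * centredBetaLaplace γ 0 (lam * x) := by
    rw [hu]; funext x; exact exp_mul_betaHat_add_exp_mul_betaHat_neg hγ (lam * x)
  have hF : ∀ k y, HasDerivAt (fun y => centredBetaLaplace γ k (lam * y))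
      (centredBetaLaplace γ (k + 1) (lam * y) * lam) y := fun k y =>
    (hasDerivAt_centredBetaLaplace hγ k (lam * y)).comp y (hasDerivAt_const_mul lam)
  have hu' : ∀ y, HasDerivAt u (C * (centredBetaLaplace γ 1 (lam * y) * lam)) y := fun y =>
    hu_eq ▸ (hF 0 y).const_mul C
  refine ⟨fun x hx => ?_, ?_⟩
  · rw [funext fun y => (hu' y).deriv]
    refine ((hasDerivAt_rpow_const (p := 2 * γ) (Or.inl (ne_of_gt hx))).mul
      (((hF 1 x).mul_const lam).const_mul C)).congr_deriv ?_
    have hpow : x ^ (2 * γ - 1) * x = x ^ (2 * γ) :=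
      rpow_sub_one_mul_self (le_of_lt hx) (by positivity)
    simp only [hu_eq, Nat.reduceAdd]
    linear_combination (C * lam * x ^ (2 * γ - 1)) * centredBetaLaplace_ode hγ (lam * x)
      - C * lam ^ 2 * (centredBetaLaplace γ 2 (lam * x) - centredBetaLaplace γ 0 (lam * x) / 4)
        * hpow
  · have hu0 : u 0 = 2 := by
      have hΓ := (Gamma_pos_of_pos hγ).ne'
      have hΓ2 := (Gamma_pos_of_pos (add_pos hγ hγ)).ne'
      simp only [hu_eq, mul_zero, centredBetaLaplace_zero_zero hγ, C]
      rw [← add_assoc, Gamma_add_one (add_pos hγ hγ).ne', Gamma_add_one hγ.ne']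
      field_simp
      ring
    exact hu0 ▸ (hu' 0).continuousAt.tendsto.mono_left nhdsWithin_le_nhds
end
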